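/- arXiv:math/0402343 — 8 statements merged into one kernel-verified Lean document; each statement's English description precedes it below -/
import Mathlib

section
/- Let 𝟘 denote the constant zero function and 𝟙 the constant one function, and write 𝟙ⁿ = Tⁿ(𝟙), 𝟘ⁿ = Tⁿ(𝟘). Then for every F ∈ 𝓕 and every n ≥ 0: 𝟙^{2n-1} ≤ T^{2n}(F) ≤ 𝟙^{2n} and 𝟙^{2n+1} ≤ T^{2n+1}(F) ≤ 𝟙^{2n}, pointwise. In particular the odd iterates 𝟙^{2n+1} form a pointwise nondecreasing sequence, the even iterates 𝟙^{2n} a pointwise nonincreasing sequence, and every odd iterate is below every even iterate. -/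
theorem stmt_2 (Ψ : (Set.Icc (0:ℝ) 1 → ℝ) → (Set.Icc (0:ℝ) 1 → ℝ))
    (hadd : ∀ F G, Ψ (F + G) = Ψ F + Ψ G)
    (hsmul : ∀ (c : ℝ) F, Ψ (c • F) = c • Ψ F)
    (hpos : ∀ F, (∀ x, 0 ≤ F x) → ∀ x, 0 ≤ Ψ F x)
    (T : (Set.Icc (0:ℝ) 1 → ℝ) → (Set.Icc (0:ℝ) 1 → ℝ))
    (hT : ∀ F x, T F x = Real.exp (-(Ψ F x)))
    (F : Set.Icc (0:ℝ) 1 → ℝ) (hF : ∀ x, F x ∈ Set.Icc (0:ℝ) 1) :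
    (∀ n x, T^[2*n] (fun _ => (0:ℝ)) x ≤ T^[2*n] F x ∧
      T^[2*n] F x ≤ T^[2*n] (fun _ => (1:ℝ)) x) ∧
    (∀ n x, T^[2*n+1] (fun _ => (1:ℝ)) x ≤ T^[2*n+1] F x ∧
      T^[2*n+1] F x ≤ T^[2*n] (fun _ => (1:ℝ)) x) ∧
    (∀ n x, T^[2*n+1] (fun _ => (1:ℝ)) x ≤ T^[2*n+3] (fun _ => (1:ℝ)) x) ∧
    (∀ n x, T^[2*n+2] (fun _ => (1:ℝ)) x ≤ T^[2*n] (fun _ => (1:ℝ)) x) ∧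
    (∀ m n x, T^[2*m+1] (fun _ => (1:ℝ)) x ≤ T^[2*n] (fun _ => (1:ℝ)) x) := by
  -- T reverses pointwise order
  have hmono : ∀ G H : Set.Icc (0:ℝ) 1 → ℝ, (∀ x, G x ≤ H x) →
      ∀ x, T H x ≤ T G x := by
    intro G H hle x
    rw [hT, hT]
    apply Real.exp_le_exp.2
    apply neg_le_neg
    have hGH : G + (H - G) = H := by abel
    have h1 : Ψ H = Ψ G + Ψ (H - G) := by rw [← hadd, hGH]
    have h2 := hpos (H - G) (fun y => by
      have := hle y; simp only [Pi.sub_apply]; linarith) x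
    have h3 := congrFun h1 x
    simp only [Pi.add_apply] at h3
    linarith
  have hTpos : ∀ G : Set.Icc (0:ℝ) 1 → ℝ, ∀ x, 0 ≤ T G x := by
    intro G x; rw [hT]; positivity
  have hTle1 : ∀ G : Set.Icc (0:ℝ) 1 → ℝ, (∀ x, 0 ≤ G x) → ∀ x, T G x ≤ 1 := by
    intro G hG x
    rw [hT]
    have := hpos G hG x
    calc Real.exp (-(Ψ G x)) ≤ Real.exp 0 := Real.exp_le_exp.2 (by linarith)
    _ = 1 := Real.exp_zero
  -- even iterates preserve order
  have evenMono : ∀ n, ∀ G H : Set.Icc (0:ℝ) 1 → ℝ, (∀ x, G x ≤ H x) →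
      ∀ x, T^[2*n] G x ≤ T^[2*n] H x := by
    intro n
    induction n with
    | zero => intro G H h x; simpa using h x
    | succ k ih =>
      intro G H h x
      rw [show 2*(k+1) = 2*k + 2 by ring,
        Function.iterate_add_apply, Function.iterate_add_apply]
      exact ih (T^[2] G) (T^[2] H)
        (fun y => hmono (T H) (T G) (hmono G H h) y) x
  have oddAnti : ∀ n, ∀ G H : Set.Icc (0:ℝ) 1 → ℝ, (∀ x, G x ≤ H x) →
      ∀ x, T^[2*n+1] H x ≤ T^[2*n+1] G x := by
    intro n G H h x
    rw [Function.iterate_succ_apply, Function.iterate_succ_apply]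
    exact evenMono n (T H) (T G) (fun y => hmono G H h y) x
  -- T 0 = 1
  have hT0 : ∀ x, T (fun _ => (0:ℝ)) x = 1 := by
    intro x
    have h0 : (fun _ : Set.Icc (0:ℝ) 1 => (0:ℝ)) =
        (0:ℝ) • (fun _ : Set.Icc (0:ℝ) 1 => (0:ℝ)) := by funext y; simp
    rw [hT]
    have h1 := hsmul 0 (fun _ : Set.Icc (0:ℝ) 1 => (0:ℝ))
    rw [← h0] at h1
    have h2 := congrFun h1 x
    simp only [Pi.smul_apply, smul_eq_mul, zero_mul] at h2
    rw [h2]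
    simp
  have hT1le : ∀ x, T (fun _ => (1:ℝ)) x ≤ 1 :=
    hTle1 _ (fun _ => zero_le_one)
  have hTT1le : ∀ x, T^[2] (fun _ => (1:ℝ)) x ≤ 1 := fun x =>
    hTle1 (T (fun _ => (1:ℝ))) (hTpos _) x
  have hF0 : ∀ x, (0:ℝ) ≤ F x := fun x => (hF x).1
  have hF1 : ∀ x, F x ≤ 1 := fun x => (hF x).2
  have part4 : ∀ n x, T^[2*n+2] (fun _ => (1:ℝ)) x ≤ T^[2*n] (fun _ => (1:ℝ)) x := by
    intro n x
    rw [show 2*n+2 = 2*n + 2 by ring, Function.iterate_add_apply]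
    exact evenMono n _ _ hTT1le x
  refine ⟨?_, ?_, ?_, part4, ?_⟩
  · intro n x
    exact ⟨evenMono n _ F hF0 x, evenMono n F _ hF1 x⟩
  · intro n x
    refine ⟨oddAnti n F _ hF1 x, ?_⟩
    rw [Function.iterate_succ_apply]
    have hTF1 : ∀ y, T F y ≤ 1 := fun y => by
      calc T F y ≤ T (fun _ => (0:ℝ)) y := hmono _ F hF0 y
      _ = 1 := hT0 y
    exact evenMono n (T F) _ hTF1 x
  · intro n x
    have h3 : T^[2*n+3] (fun _ => (1:ℝ)) =
        T^[2*n+1] (T^[2] (fun _ => (1:ℝ))) := by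
      rw [show 2*n+3 = (2*n+1) + 2 by ring, Function.iterate_add_apply]
    rw [h3]
    exact oddAnti n _ _ hTT1le x
  · have evenDec : ∀ k n x, T^[2*(n+k)] (fun _ => (1:ℝ)) x ≤
        T^[2*n] (fun _ => (1:ℝ)) x := by
      intro k
      induction k with
      | zero => intro n x; simp
      | succ j ih =>
        intro n x
        calc T^[2*(n+(j+1))] (fun _ => (1:ℝ)) x
            = T^[2*(n+j)+2] (fun _ => (1:ℝ)) x := by ring_nf
          _ ≤ T^[2*(n+j)] (fun _ => (1:ℝ)) x := part4 (n+j) x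
          _ ≤ T^[2*n] (fun _ => (1:ℝ)) x := ih n x
    have oddInc : ∀ k m x, T^[2*m+1] (fun _ => (1:ℝ)) x ≤
        T^[2*(m+k)+1] (fun _ => (1:ℝ)) x := by
      intro k
      induction k with
      | zero => intro m x; simp
      | succ j ih =>
        intro m x
        have h5 : T^[2*(m+(j+1))+1] (fun _ => (1:ℝ)) =
            T^[2*(m+j)+1] (T^[2] (fun _ => (1:ℝ))) := by
          rw [show 2*(m+(j+1))+1 = (2*(m+j)+1) + 2 by ring,
            Function.iterate_add_apply]
        rw [h5]
        calc T^[2*m+1] (fun _ => (1:ℝ)) x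
            ≤ T^[2*(m+j)+1] (fun _ => (1:ℝ)) x := ih m x
          _ ≤ T^[2*(m+j)+1] (T^[2] (fun _ => (1:ℝ))) x := oddAnti _ _ _ hTT1le x
    have oddLeEven : ∀ k x, T^[2*k+1] (fun _ => (1:ℝ)) x ≤
        T^[2*k] (fun _ => (1:ℝ)) x := by
      intro k x
      rw [Function.iterate_succ_apply]
      exact evenMono k _ _ hT1le x
    intro m n x
    calc T^[2*m+1] (fun _ => (1:ℝ)) x
        ≤ T^[2*(m+n)+1] (fun _ => (1:ℝ)) x := oddInc n m x
      _ ≤ T^[2*(m+n)] (fun _ => (1:ℝ)) x := oddLeEven (m+n) x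
      _ ≤ T^[2*n] (fun _ => (1:ℝ)) x := by
          have := evenDec m n x
          simpa [Nat.add_comm] using this
end

section
/- The dynamical system T has a fixed point which is a global attractor in the sense of pointwise convergence (i.e., there exists F* with T(F*) = F* and Tⁿ(F) → F* pointwise for every F ∈ 𝓕) if and only if L = U, where L = lim T^{2n+1}(𝟙) and U = lim T^{2n}(𝟙) pointwise. -/
open Filter

theorem tendsto_of_even_odd' {f : ℕ → ℝ} {l : ℝ}
    (he : Tendsto (fun n => f (2*n)) atTop (nhds l))
    (ho : Tendsto (fun n => f (2*n+1)) atTop (nhds l)) :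
    Tendsto f atTop (nhds l) := by
  rw [Metric.tendsto_atTop] at he ho ⊢
  intro ε hε
  obtain ⟨N1, h1⟩ := he ε hε
  obtain ⟨N2, h2⟩ := ho ε hε
  refine ⟨2*max N1 N2 + 1, fun n hn => ?_⟩
  rcases Nat.even_or_odd n with ⟨k, hk⟩ | ⟨k, hk⟩
  · have : n = 2*k := by omega
    rw [this]
    exact h1 k (by omega)
  · have : n = 2*k+1 := by omega
    rw [this]
    exact h2 k (by omega)

theorem stmt_4 (Ψ : (Set.Icc (0:ℝ) 1 → ℝ) → (Set.Icc (0:ℝ) 1 → ℝ))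
    (hadd : ∀ F G, Ψ (F + G) = Ψ F + Ψ G)
    (hsmul : ∀ (c : ℝ) F, Ψ (c • F) = c • Ψ F)
    (hpos : ∀ F, (∀ x, 0 ≤ F x) → ∀ x, 0 ≤ Ψ F x)
    (T : (Set.Icc (0:ℝ) 1 → ℝ) → (Set.Icc (0:ℝ) 1 → ℝ))
    (hT : ∀ F x, T F x = Real.exp (-(Ψ F x)))
    (L U : Set.Icc (0:ℝ) 1 → ℝ)
    (hL : ∀ x, Tendsto (fun n => T^[2*n+1] (fun _ => (1:ℝ)) x) atTop (nhds (L x)))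
    (hU : ∀ x, Tendsto (fun n => T^[2*n] (fun _ => (1:ℝ)) x) atTop (nhds (U x))) :
    (∃ Fstar : Set.Icc (0:ℝ) 1 → ℝ, (∀ x, Fstar x ∈ Set.Icc (0:ℝ) 1) ∧
      T Fstar = Fstar ∧
      ∀ F : Set.Icc (0:ℝ) 1 → ℝ, (∀ x, F x ∈ Set.Icc (0:ℝ) 1) →
        ∀ x, Tendsto (fun n => T^[n] F x) atTop (nhds (Fstar x))) ↔ L = U := by
  constructor
  · rintro ⟨Fs, hmem, hfix, hatt⟩
    have hone : ∀ x : Set.Icc (0:ℝ) 1, (fun _ : Set.Icc (0:ℝ) 1 => (1:ℝ)) x ∈ Set.Icc (0:ℝ) 1 :=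
      fun _ => ⟨zero_le_one, le_refl 1⟩
    funext x
    have h1 := hatt (fun _ => (1:ℝ)) hone x
    have t1 : Tendsto (fun n => 2*n+1) atTop atTop :=
      tendsto_atTop_mono (fun n => by simp only [id_eq]; omega) tendsto_id
    have t2 : Tendsto (fun n => 2*n) atTop atTop :=
      tendsto_atTop_mono (fun n => by simp only [id_eq]; omega) tendsto_id
    have e1 : L x = Fs x := tendsto_nhds_unique (hL x) (h1.comp t1)
    have e2 : U x = Fs x := tendsto_nhds_unique (hU x) (h1.comp t2)
    rw [e1, e2]
  · intro hLU
    -- basic monotonicity facts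
    have hmono : ∀ F G : Set.Icc (0:ℝ) 1 → ℝ, (∀ x, F x ≤ G x) → ∀ x, Ψ F x ≤ Ψ G x := by
      intro F G h x
      have e : F + (G - F) = G := by ext y; simp
      have h2 := hadd F (G - F)
      rw [e] at h2
      have h3 : 0 ≤ Ψ (G - F) x := hpos _ (fun y => by simpa using sub_nonneg.2 (h y)) x
      calc Ψ F x ≤ Ψ F x + Ψ (G - F) x := le_add_of_nonneg_right h3
        _ = Ψ G x := by rw [h2]; rfl
    have hTanti : ∀ F G : Set.Icc (0:ℝ) 1 → ℝ, (∀ x, F x ≤ G x) → ∀ x, T G x ≤ T F x := by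
      intro F G h x
      rw [hT, hT]
      exact Real.exp_le_exp.2 (neg_le_neg (hmono F G h x))
    have hTpos : ∀ (F : Set.Icc (0:ℝ) 1 → ℝ) x, 0 < T F x := by
      intro F x; rw [hT]; exact Real.exp_pos _
    have hTle1 : ∀ F : Set.Icc (0:ℝ) 1 → ℝ, (∀ x, 0 ≤ F x) → ∀ x, T F x ≤ 1 := by
      intro F h x; rw [hT]
      exact Real.exp_le_one_iff.2 (neg_nonpos.2 (hpos F h x))
    set One : Set.Icc (0:ℝ) 1 → ℝ := fun _ => (1:ℝ) with hOne
    have ha : ∀ n, T^[n+1] One = T (T^[n] One) := fun n => Function.iterate_succ_apply' T n One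
    have ha0 : T^[0] One = One := rfl
    have hapos : ∀ n x, 0 ≤ T^[n] One x := by
      intro n x
      cases n with
      | zero => rw [ha0]; exact zero_le_one
      | succ k => rw [ha]; exact (hTpos _ x).le
    have hale1 : ∀ n x, T^[n+1] One x ≤ 1 := by
      intro n x; rw [ha]; exact hTle1 _ (hapos n) x
    -- a 1 ≤ a 0 and a 2 ≤ a 0
    have h10 : ∀ x, T^[1] One x ≤ T^[0] One x := fun x => hale1 0 x
    have h20 : ∀ x, T^[2] One x ≤ T^[0] One x := fun x => hale1 1 x
    -- applying T reverses pointwise inequalities between iterates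
    have stepT : ∀ m k, (∀ x, T^[m] One x ≤ T^[k] One x) →
        ∀ x, T^[k+1] One x ≤ T^[m+1] One x := by
      intro m k h x
      have := hTanti _ _ h x
      rwa [← ha, ← ha] at this
    -- even iterates decrease
    have hdec : ∀ n x, T^[2*n+2] One x ≤ T^[2*n] One x := by
      intro n
      induction n with
      | zero => simpa using h20
      | succ k ih =>
        have h1 := stepT _ _ ih          -- a(2k+1) ≤ a(2k+2+1)
        have h2 := stepT _ _ h1          -- a(2k+2+1+1) ≤ a(2k+1+1)
        intro x
        have e1 : 2*(k+1)+2 = 2*k+2+1+1 := by omega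
        have e2 : 2*(k+1) = 2*k+1+1 := by omega
        rw [e1, e2]
        exact h2 x
    -- odd iterates increase
    have hinc : ∀ n x, T^[2*n+1] One x ≤ T^[2*n+3] One x := by
      intro n x
      have := stepT _ _ (hdec n) x       -- a(2n+1) ≤ a(2n+2+1)
      have e : 2*n+3 = 2*n+2+1 := by omega
      rw [e]
      exact this
    -- odd below even (same index)
    have hOE : ∀ n x, T^[2*n+1] One x ≤ T^[2*n] One x := by
      intro n
      induction n with
      | zero => simpa using h10
      | succ k ih =>
        have h1 := stepT _ _ ih          -- a(2k+1) ≤ a(2k+1+1)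
        have h2 := stepT _ _ h1          -- a(2k+1+1+1) ≤ a(2k+1+1)
        intro x
        have e1 : 2*(k+1)+1 = 2*k+1+1+1 := by omega
        have e2 : 2*(k+1) = 2*k+1+1 := by omega
        rw [e1, e2]
        exact h2 x
    -- monotone comparisons over indices
    have hmonoOdd : ∀ p q, p ≤ q → ∀ x, T^[2*p+1] One x ≤ T^[2*q+1] One x := by
      intro p q h
      induction q with
      | zero =>
        have : p = 0 := Nat.le_zero.mp h
        subst this; exact fun x => le_refl _
      | succ k ih =>
        by_cases hpk : p ≤ k
        · intro x
          refine le_trans (ih hpk x) ?_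
          have e : 2*(k+1)+1 = 2*k+3 := by omega
          rw [e]; exact hinc k x
        · have : p = k+1 := by omega
          subst this; exact fun x => le_refl _
    have hantiEven : ∀ p q, p ≤ q → ∀ x, T^[2*q] One x ≤ T^[2*p] One x := by
      intro p q h
      induction q with
      | zero =>
        have : p = 0 := Nat.le_zero.mp h
        subst this; exact fun x => le_refl _
      | succ k ih =>
        by_cases hpk : p ≤ k
        · intro x
          refine le_trans ?_ (ih hpk x)
          have e : 2*(k+1) = 2*k+2 := by omega
          rw [e]; exact hdec k x
        · have : p = k+1 := by omega
          subst this; exact fun x => le_refl _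
    -- terms bound limits
    have hL_ge : ∀ n x, T^[2*n+1] One x ≤ L x := by
      intro n x
      refine ge_of_tendsto (hL x) ?_
      filter_upwards [eventually_ge_atTop n] with m hm
      exact hmonoOdd n m hm x
    have hU_le : ∀ n x, U x ≤ T^[2*n] One x := by
      intro n x
      refine le_of_tendsto (hU x) ?_
      filter_upwards [eventually_ge_atTop n] with m hm
      exact hantiEven n m hm x
    have hUshift : ∀ x, Tendsto (fun n => T^[2*n+2] One x) atTop (nhds (U x)) := by
      intro x
      have := (hU x).comp (tendsto_add_atTop_nat 1)
      refine this.congr fun n => ?_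
      show T^[2*(n+1)] One x = T^[2*n+2] One x
      rw [show 2*(n+1) = 2*n+2 from by omega]
    -- membership of L in [0,1]
    have hLmem : ∀ x, L x ∈ Set.Icc (0:ℝ) 1 := by
      intro x
      constructor
      · exact ge_of_tendsto (hL x) (Eventually.of_forall fun n => hapos _ x)
      · exact le_of_tendsto (hL x) (Eventually.of_forall fun n => hale1 _ x)
    -- fixed point
    have hfix : T L = L := by
      funext x
      have hTL_ge : ∀ n, T^[2*n+1] One x ≤ T L x := by
        intro n
        have h := hTanti L (T^[2*n] One) (fun y => by rw [hLU]; exact hU_le n y) x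
        rwa [← ha] at h
      have hTL_le : ∀ n, T L x ≤ T^[2*n+2] One x := by
        intro n
        have h := hTanti (T^[2*n+1] One) L (fun y => hL_ge n y) x
        rwa [show 2*n+2 = 2*n+1+1 from by omega, ha]
      have hle : L x ≤ T L x :=
        le_of_tendsto (hL x) (Eventually.of_forall hTL_ge)
      have hge : T L x ≤ U x :=
        ge_of_tendsto (hUshift x) (Eventually.of_forall hTL_le)
      rw [← hLU] at hge
      exact le_antisymm hge hle
    refine ⟨L, hLmem, hfix, ?_⟩
    -- global attraction
    intro F hF x
    have hb : ∀ n, T^[n+1] F = T (T^[n] F) := fun n => Function.iterate_succ_apply' T n F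
    -- sandwich for odd iterates of F
    have key : ∀ n, (∀ y, T^[2*n+1] One y ≤ T^[2*n+1] F y) ∧
        (∀ y, T^[2*n+1] F y ≤ T^[2*n] One y) := by
      intro n
      induction n with
      | zero =>
        constructor
        · intro y
          have h := hTanti F One (fun z => (hF z).2) y
          simpa [hb, ha] using h
        · intro y
          have h := hTle1 F (fun z => (hF z).1) y
          simpa [hb] using h
      | succ k ih =>
        obtain ⟨ih1, ih2⟩ := ih
        have s1 : ∀ y, T^[2*k+1+1] F y ≤ T^[2*k+1+1] One y := by
          intro y
          have h := hTanti _ _ ih1 y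
          rwa [← ha, ← hb] at h
        have s2 : ∀ y, T^[2*k+1] One y ≤ T^[2*k+1+1] F y := by
          intro y
          have h := hTanti _ _ ih2 y
          rwa [← ha, ← hb] at h
        constructor
        · intro y
          have h := hTanti _ _ s1 y
          rw [← ha, ← hb] at h
          have e : 2*(k+1)+1 = 2*k+1+1+1 := by omega
          rw [e]
          exact h
        · intro y
          have h := hTanti _ _ s2 y
          rw [← ha, ← hb] at h
          have e1 : 2*(k+1)+1 = 2*k+1+1+1 := by omega
          have e2 : 2*(k+1) = 2*k+1+1 := by omega
          rw [e1, e2]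
          exact h
    -- even sandwich: a(2n+1) ≤ T^[2n+2] F ≤ a(2n+2)
    have keyE : ∀ n, (∀ y, T^[2*n+1] One y ≤ T^[2*n+2] F y) ∧
        (∀ y, T^[2*n+2] F y ≤ T^[2*n+2] One y) := by
      intro n
      obtain ⟨k1, k2⟩ := key n
      constructor
      · intro y
        have h := hTanti _ _ k2 y
        rw [← ha, ← hb] at h
        rwa [show 2*n+2 = 2*n+1+1 from by omega]
      · intro y
        have h := hTanti _ _ k1 y
        rw [← ha, ← hb] at h
        rwa [show 2*n+2 = 2*n+1+1 from by omega]
    -- odd subsequence converges to L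
    have hodd : Tendsto (fun n => T^[2*n+1] F x) atTop (nhds (L x)) := by
      refine tendsto_of_tendsto_of_tendsto_of_le_of_le (hL x) ?_
        (fun n => (key n).1 x) (fun n => (key n).2 x)
      rw [hLU]; exact hU x
    -- even subsequence converges to L
    have hshift : Tendsto (fun n => T^[2*n+2] F x) atTop (nhds (L x)) := by
      refine tendsto_of_tendsto_of_tendsto_of_le_of_le (hL x) ?_
        (fun n => (keyE n).1 x) (fun n => (keyE n).2 x)
      rw [hLU]; exact hUshift x
    have heven : Tendsto (fun n => T^[2*n] F x) atTop (nhds (L x)) := by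
      rw [← tendsto_add_atTop_iff_nat 1]
      refine hshift.congr fun n => ?_
      rw [show 2*n+2 = 2*(n+1) from by omega]
    exact tendsto_of_even_odd' heven hodd
end

section
/- If ‖Ψ‖_∞ < e, then T² = T ∘ T is a contraction on 𝓕 with Lipschitz constant at most ‖Ψ‖_∞ / e in the sup norm: ‖T²(F+H) − T²(F)‖_∞ ≤ (‖Ψ‖_∞/e) ‖H‖_∞ for F, F+H ∈ 𝓕. Consequently T has a unique fixed point in 𝓕 which is a global attractor. -/
open Filter

lemma aux_mul_exp_neg_le (t : ℝ) : t * Real.exp (-t) ≤ Real.exp (-1) := by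
  have h : t ≤ Real.exp (t - 1) := by
    have := Real.add_one_le_exp (t - 1); linarith
  have h2 : t * Real.exp (-t) ≤ Real.exp (t - 1) * Real.exp (-t) :=
    mul_le_mul_of_nonneg_right h (Real.exp_pos _).le
  calc t * Real.exp (-t) ≤ Real.exp (t - 1) * Real.exp (-t) := h2
    _ = Real.exp (-1) := by rw [← Real.exp_add]; ring_nf

lemma aux_exp_lip {a b : ℝ} (ha : 0 < a) (hb : 0 < b) :
    |Real.exp (-a) - Real.exp (-b)| ≤ Real.exp (-1) * |Real.log a - Real.log b| := by
  set f : ℝ → ℝ := fun s => Real.exp (-(Real.exp s)) with hf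
  have hder : ∀ s : ℝ, HasDerivAt f (Real.exp (-(Real.exp s)) * (-(Real.exp s))) s := by
    intro s
    exact ((Real.hasDerivAt_exp s).neg).exp
  have hbound : ∀ s : ℝ, ‖Real.exp (-(Real.exp s)) * (-(Real.exp s))‖ ≤ Real.exp (-1) := by
    intro s
    rw [Real.norm_eq_abs, abs_mul, abs_neg, abs_of_pos (Real.exp_pos _),
      abs_of_pos (Real.exp_pos _), mul_comm]
    exact aux_mul_exp_neg_le _
  have key := Convex.norm_image_sub_le_of_norm_hasDerivWithin_le
    (f' := fun s => Real.exp (-(Real.exp s)) * (-(Real.exp s)))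
    (fun s _ => (hder s).hasDerivWithinAt) (fun s _ => hbound s) convex_univ
    (Set.mem_univ (Real.log b)) (Set.mem_univ (Real.log a))
  simpa [hf, Real.exp_log ha, Real.exp_log hb, Real.norm_eq_abs] using key

lemma key_contr (Ψ : (Set.Icc (0:ℝ) 1 → ℝ) → (Set.Icc (0:ℝ) 1 → ℝ))
    (hadd : ∀ F G, Ψ (F + G) = Ψ F + Ψ G)
    (hsmul : ∀ (c : ℝ) F, Ψ (c • F) = c • Ψ F)
    (hpos : ∀ F, (∀ x, 0 ≤ F x) → ∀ x, 0 ≤ Ψ F x)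
    (C : ℝ) (hC : 0 ≤ C)
    (hnorm : ∀ (F : Set.Icc (0:ℝ) 1 → ℝ) (M : ℝ), (∀ x, |F x| ≤ M) → ∀ x, |Ψ F x| ≤ C * M)
    (T : (Set.Icc (0:ℝ) 1 → ℝ) → (Set.Icc (0:ℝ) 1 → ℝ))
    (hT : ∀ F x, T F x = Real.exp (-(Ψ F x))) :
    ∀ (F H : Set.Icc (0:ℝ) 1 → ℝ) (η : ℝ),
      (∀ x, F x ∈ Set.Icc (0:ℝ) 1) → (∀ x, F x + H x ∈ Set.Icc (0:ℝ) 1) →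
      (∀ x, |H x| ≤ η) →
      ∀ x, |T (T (F + H)) x - T (T F) x| ≤ (C / Real.exp 1) * η := by
  have hmono : ∀ A B : Set.Icc (0:ℝ) 1 → ℝ, (∀ y, A y ≤ B y) → ∀ y, Ψ A y ≤ Ψ B y := by
    intro A B hAB y
    have hBA : B = A + (B - A) := by ring
    have h0 : 0 ≤ Ψ (B - A) y := hpos _ (fun z => by simpa [Pi.sub_apply] using sub_nonneg.mpr (hAB z)) y
    calc Ψ A y ≤ Ψ A y + Ψ (B - A) y := by linarith
      _ = Ψ B y := by rw [← Pi.add_apply, ← hadd, ← hBA]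
  intro F H η hF hFH hH x
  have hη : 0 ≤ η := le_trans (abs_nonneg _) (hH ⟨0, by norm_num⟩)
  have hΨH : ∀ y, |Ψ H y| ≤ C * η := hnorm H η hH
  -- pointwise relation between T (F+H) and T F
  have hrel : ∀ y, T (F + H) y = T F y * Real.exp (-(Ψ H y)) := by
    intro y
    rw [hT, hT, hadd, Pi.add_apply, ← Real.exp_add]
    ring_nf
  have hTFpos : ∀ y, 0 < T F y := by intro y; rw [hT]; exact Real.exp_pos _
  have hup : ∀ y, T (F + H) y ≤ (Real.exp (C * η) • T F) y := by
    intro y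
    rw [hrel y, Pi.smul_apply, smul_eq_mul, mul_comm (Real.exp (C * η))]
    refine mul_le_mul_of_nonneg_left (Real.exp_le_exp.mpr ?_) (hTFpos y).le
    have := hΨH y
    have := abs_le.mp this
    linarith
  have hlow : ∀ y, (Real.exp (-(C * η)) • T F) y ≤ T (F + H) y := by
    intro y
    rw [hrel y, Pi.smul_apply, smul_eq_mul, mul_comm (Real.exp (-(C * η)))]
    refine mul_le_mul_of_nonneg_left (Real.exp_le_exp.mpr ?_) (hTFpos y).le
    have := abs_le.mp (hΨH y)
    linarith
  set a := Ψ (T (F + H)) x with ha_def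
  set b := Ψ (T F) x with hb_def
  have hb0 : 0 ≤ b := hpos _ (fun y => (hTFpos y).le) x
  have ha0 : 0 ≤ a := hpos _ (fun y => by rw [hT]; exact (Real.exp_pos _).le) x
  have haub : a ≤ Real.exp (C * η) * b := by
    have := hmono _ _ hup x
    rwa [hsmul, Pi.smul_apply, smul_eq_mul] at this
  have halb : Real.exp (-(C * η)) * b ≤ a := by
    have := hmono _ _ hlow x
    rwa [hsmul, Pi.smul_apply, smul_eq_mul] at this
  have hgoal : |Real.exp (-a) - Real.exp (-b)| ≤ C / Real.exp 1 * η := by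
    rcases hb0.eq_or_lt with hb | hb
    · have ha' : a = 0 := le_antisymm (by rw [← hb] at haub; simpa using haub) ha0
      rw [ha', ← hb]
      simp
      positivity
    · have ha : 0 < a := lt_of_lt_of_le (by positivity) halb
      have hlog : |Real.log a - Real.log b| ≤ C * η := by
        rw [abs_le]
        constructor
        · have : Real.log (Real.exp (-(C * η)) * b) ≤ Real.log a :=
            Real.log_le_log (by positivity) halb
          rw [Real.log_mul (Real.exp_ne_zero _) hb.ne', Real.log_exp] at this
          linarith
        · have : Real.log a ≤ Real.log (Real.exp (C * η) * b) :=
            Real.log_le_log ha haub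
          rw [Real.log_mul (Real.exp_ne_zero _) hb.ne', Real.log_exp] at this
          linarith
      calc |Real.exp (-a) - Real.exp (-b)| ≤ Real.exp (-1) * |Real.log a - Real.log b| :=
            aux_exp_lip ha hb
        _ ≤ Real.exp (-1) * (C * η) :=
            mul_le_mul_of_nonneg_left hlog (Real.exp_pos _).le
        _ = C / Real.exp 1 * η := by rw [Real.exp_neg]; ring
  rw [hT, hT]
  exact hgoal

theorem stmt_7 (Ψ : (Set.Icc (0:ℝ) 1 → ℝ) → (Set.Icc (0:ℝ) 1 → ℝ))
    (hadd : ∀ F G, Ψ (F + G) = Ψ F + Ψ G)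
    (hsmul : ∀ (c : ℝ) F, Ψ (c • F) = c • Ψ F)
    (hpos : ∀ F, (∀ x, 0 ≤ F x) → ∀ x, 0 ≤ Ψ F x)
    (C : ℝ) (hC : 0 ≤ C) (hCe : C < Real.exp 1)
    (hnorm : ∀ (F : Set.Icc (0:ℝ) 1 → ℝ) (M : ℝ), (∀ x, |F x| ≤ M) → ∀ x, |Ψ F x| ≤ C * M)
    (T : (Set.Icc (0:ℝ) 1 → ℝ) → (Set.Icc (0:ℝ) 1 → ℝ))
    (hT : ∀ F x, T F x = Real.exp (-(Ψ F x))) :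
    (∀ (F H : Set.Icc (0:ℝ) 1 → ℝ) (η : ℝ),
      (∀ x, F x ∈ Set.Icc (0:ℝ) 1) → (∀ x, F x + H x ∈ Set.Icc (0:ℝ) 1) →
      (∀ x, |H x| ≤ η) →
      ∀ x, |T (T (F + H)) x - T (T F) x| ≤ (C / Real.exp 1) * η) ∧
    ∃ Fstar : Set.Icc (0:ℝ) 1 → ℝ, (∀ x, Fstar x ∈ Set.Icc (0:ℝ) 1) ∧
      T Fstar = Fstar ∧
      (∀ G : Set.Icc (0:ℝ) 1 → ℝ, (∀ x, G x ∈ Set.Icc (0:ℝ) 1) → T G = G → G = Fstar) ∧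
      ∀ F : Set.Icc (0:ℝ) 1 → ℝ, (∀ x, F x ∈ Set.Icc (0:ℝ) 1) →
        Tendsto (fun n => ⨆ x, |T^[n] F x - Fstar x|) atTop (nhds 0) := by
  have key := key_contr Ψ hadd hsmul hpos C hC hnorm T hT
  refine ⟨key, ?_⟩
  set r := C / Real.exp 1 with hr_def
  have hr0 : 0 ≤ r := by positivity
  have hr1 : r < 1 := (div_lt_one (Real.exp_pos 1)).mpr hCe
  have h1r : 0 < 1 - r := by linarith
  have hrpow : Tendsto (fun n : ℕ => r ^ n) atTop (nhds 0) :=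
    tendsto_pow_atTop_nhds_zero_of_lt_one hr0 hr1
  -- membership predicate
  set mem : (Set.Icc (0:ℝ) 1 → ℝ) → Prop := fun F => ∀ x, F x ∈ Set.Icc (0:ℝ) 1 with hmem_def
  have habs0 : ∀ d : ℝ, (∀ m : ℕ, |d| ≤ r ^ m) → d = 0 := by
    intro d hd
    have h : |d| ≤ 0 := ge_of_tendsto hrpow (Eventually.of_forall hd)
    exact abs_nonpos_iff.mp h
  have hTmem : ∀ F, mem F → mem (T F) := by
    intro F hF x
    rw [hT]
    refine ⟨(Real.exp_pos _).le, Real.exp_le_one_iff.mpr ?_⟩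
    simpa using hpos F (fun y => (hF y).1) x
  set S : (Set.Icc (0:ℝ) 1 → ℝ) → (Set.Icc (0:ℝ) 1 → ℝ) := fun F => T (T F) with hS_def
  have hSmem : ∀ F, mem F → mem (S F) := fun F hF => hTmem _ (hTmem _ hF)
  have contr : ∀ F G, mem F → mem G → ∀ η, (∀ x, |G x - F x| ≤ η) →
      ∀ x, |S G x - S F x| ≤ r * η := by
    intro F G hF hG η hη x
    have he : F + (G - F) = G := by ring
    have h2 : ∀ y, F y + (G - F) y ∈ Set.Icc (0:ℝ) 1 := by
      intro y
      have : F y + (G y - F y) = G y := by ring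
      rw [Pi.sub_apply, this]; exact hG y
    have := key F (G - F) η hF h2 (fun y => by simpa [Pi.sub_apply] using hη y) x
    rwa [he] at this
  have hdiff1 : ∀ (A B : Set.Icc (0:ℝ) 1 → ℝ), mem A → mem B →
      ∀ x, |A x - B x| ≤ 1 := by
    intro A B hA hB x
    have h1 := hA x; have h2 := hB x
    rw [Set.mem_Icc] at h1 h2
    rw [abs_le]; constructor <;> linarith [h1.1, h1.2, h2.1, h2.2]
  set F0 : Set.Icc (0:ℝ) 1 → ℝ := fun _ => 0 with hF0_def
  have hF0mem : mem F0 := fun x => by simp [hF0_def]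
  have hitmem : ∀ n, mem (S^[n] F0) := by
    intro n
    induction n with
    | zero => simpa using hF0mem
    | succ n ih => rw [Function.iterate_succ_apply']; exact hSmem _ ih
  have hstep : ∀ n x, |S^[n+1] F0 x - S^[n] F0 x| ≤ r ^ n := by
    intro n
    induction n with
    | zero =>
      intro x
      simpa using hdiff1 (S^[1] F0) (S^[0] F0) (hitmem 1) (hitmem 0) x
    | succ n ih =>
      intro x
      have := contr (S^[n] F0) (S^[n+1] F0) (hitmem n) (hitmem (n+1)) (r ^ n) ih x
      rw [← Function.iterate_succ_apply' S, ← Function.iterate_succ_apply' S] at this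
      calc |S^[n+1+1] F0 x - S^[n+1] F0 x| ≤ r * r ^ n := this
        _ = r ^ (n+1) := by rw [pow_succ]; ring
  have hcauchy : ∀ x, CauchySeq (fun n => S^[n] F0 x) := by
    intro x
    apply cauchySeq_of_le_geometric r 1 hr1
    intro n
    rw [Real.dist_eq]
    simpa [abs_sub_comm] using hstep n x
  have hconv : ∀ x, ∃ L, Tendsto (fun n => S^[n] F0 x) atTop (nhds L) :=
    fun x => cauchySeq_tendsto_of_complete (hcauchy x)
  choose Fstar hFstar using hconv
  have hdist : ∀ n x, |S^[n] F0 x - Fstar x| ≤ r ^ n / (1 - r) := by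
    intro n x
    have := dist_le_of_le_geometric_of_tendsto r 1 hr1
      (fun n => by rw [Real.dist_eq]; simpa [abs_sub_comm] using hstep n x)
      (hFstar x) n
    rw [Real.dist_eq] at this
    simpa using this
  have hFstarmem : mem Fstar := by
    intro x
    exact isClosed_Icc.mem_of_tendsto (hFstar x)
      (Eventually.of_forall fun n => hitmem n x)
  have hSfix : S Fstar = Fstar := by
    funext x
    have hb : ∀ n : ℕ, |S Fstar x - Fstar x| ≤ (2 * r / (1 - r) + 1 / (1 - r)) * r ^ n := by
      intro n
      have h1 : |S Fstar x - S (S^[n] F0) x| ≤ r * (r ^ n / (1 - r)) :=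
        contr (S^[n] F0) Fstar (hitmem n) hFstarmem (r ^ n / (1 - r))
          (fun y => by simpa [abs_sub_comm] using hdist n y) x
      have h2 : |S (S^[n] F0) x - Fstar x| ≤ r ^ n / (1 - r) := by
        have := hdist (n + 1) x
        rw [Function.iterate_succ_apply'] at this
        calc |S (S^[n] F0) x - Fstar x| ≤ r ^ (n+1) / (1 - r) := this
          _ ≤ r ^ n / (1 - r) := by
              exact (div_le_div_iff_of_pos_right h1r).mpr
                (pow_le_pow_of_le_one hr0 hr1.le (Nat.le_succ n))
      calc |S Fstar x - Fstar x|
          ≤ |S Fstar x - S (S^[n] F0) x| + |S (S^[n] F0) x - Fstar x| := abs_sub_le _ _ _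
        _ ≤ r * (r ^ n / (1 - r)) + r ^ n / (1 - r) := add_le_add h1 h2
        _ = (r + 1) * (1 - r)⁻¹ * r ^ n := by field_simp
        _ ≤ (2 * r + 1) * (1 - r)⁻¹ * r ^ n := by
            have hi : (0:ℝ) ≤ (1 - r)⁻¹ := by positivity
            have hpn : 0 ≤ r ^ n := pow_nonneg hr0 n
            nlinarith [mul_nonneg (mul_nonneg hr0 hi) hpn]
        _ = (2 * r / (1 - r) + 1 / (1 - r)) * r ^ n := by field_simp; try ring
    have hlim : Tendsto (fun n : ℕ => (2 * r / (1 - r) + 1 / (1 - r)) * r ^ n)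
        atTop (nhds 0) := by
      simpa using hrpow.const_mul (2 * r / (1 - r) + 1 / (1 - r))
    have : |S Fstar x - Fstar x| ≤ 0 := ge_of_tendsto hlim (Eventually.of_forall hb)
    exact sub_eq_zero.mp (abs_nonpos_iff.mp this)
  -- geometric convergence towards Fstar for S-iterates
  have hSiter : ∀ F, mem F → ∀ m x, |S^[m] F x - Fstar x| ≤ r ^ m := by
    intro F hF m
    induction m with
    | zero => intro x; simpa using hdiff1 F Fstar hF hFstarmem x
    | succ m ih =>
      intro x
      have hm : mem (S^[m] F) := by
        clear ih
        induction m with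
        | zero => simpa using hF
        | succ m ih2 => rw [Function.iterate_succ_apply']; exact hSmem _ ih2
      have := contr Fstar (S^[m] F) hFstarmem hm (r ^ m)
        (fun y => by simpa [abs_sub_comm] using ih y) x
      rw [hSfix, ← Function.iterate_succ_apply' S] at this
      calc |S^[m+1] F x - Fstar x| ≤ r * r ^ m := this
        _ = r ^ (m+1) := by rw [pow_succ]; ring
  have hfixaux : ∀ G, mem G → S G = G → G = Fstar := by
    intro G hG hSG
    funext x
    refine sub_eq_zero.mp (habs0 _ ?_)
    intro m
    have hit : S^[m] G = G := Function.iterate_fixed hSG m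
    have := hSiter G hG m x
    rwa [hit] at this
  have hTfix : T Fstar = Fstar := by
    have hmemT : mem (T Fstar) := hTmem _ hFstarmem
    have hST : S (T Fstar) = T Fstar := by
      show T (T (T Fstar)) = T Fstar
      have : T (S Fstar) = T Fstar := by rw [hSfix]
      exact this
    exact hfixaux (T Fstar) hmemT hST
  refine ⟨Fstar, hFstarmem, hTfix, ?_, ?_⟩
  · intro G hG hTG
    exact hfixaux G hG (by show T (T G) = G; rw [hTG, hTG])
  · intro F hF
    have hTS2 : ∀ G, T^[2] G = S G := by
      intro G
      rw [show (2:ℕ) = 1 + 1 from rfl, Function.iterate_add_apply,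
        Function.iterate_one]
    have hTSm : ∀ m (G : Set.Icc (0:ℝ) 1 → ℝ), T^[2*m] G = S^[m] G := by
      intro m
      induction m with
      | zero => intro G; simp
      | succ m ih =>
        intro G
        have h2 : 2 * (m + 1) = 2 * m + 2 := by ring
        rw [h2, Function.iterate_add_apply, ih, hTS2,
          ← Function.iterate_succ_apply]
    have hTn : ∀ n x, |T^[n] F x - Fstar x| ≤ r ^ (n / 2) := by
      intro n x
      rcases Nat.even_or_odd n with ⟨m, hm⟩ | ⟨m, hm⟩
      · have hn : n = 2 * m := by omega
        have hd : n / 2 = m := by omega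
        rw [hd, hn, hTSm m F]
        exact hSiter F hF m x
      · have hn : n = 2 * m + 1 := by omega
        have hd : n / 2 = m := by omega
        rw [hd, hn, Function.iterate_add_apply, Function.iterate_one, hTSm m (T F)]
        exact hSiter (T F) (hTmem F hF) m x
    have hbdd : ∀ n : ℕ, BddAbove (Set.range fun x => |T^[n] F x - Fstar x|) := by
      intro n
      refine ⟨r ^ (n / 2), ?_⟩
      rintro y ⟨x, rfl⟩
      exact hTn n x
    have hg0 : ∀ n : ℕ, 0 ≤ ⨆ x, |T^[n] F x - Fstar x| := by
      intro n
      exact le_trans (abs_nonneg _) (le_ciSup (hbdd n) ⟨0, by norm_num⟩)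
    have hgle : ∀ n : ℕ, (⨆ x, |T^[n] F x - Fstar x|) ≤ r ^ (n / 2) := by
      intro n
      exact ciSup_le (hTn n)
    have hhalf : Tendsto (fun n : ℕ => n / 2) atTop atTop := by
      refine tendsto_atTop.mpr fun b => ?_
      filter_upwards [eventually_ge_atTop (2 * b)] with n hn
      omega
    exact squeeze_zero hg0 hgle (hrpow.comp hhalf)
end

section
/- The convolution operator Φ is self-adjoint with respect to the pairing given by Lebesgue integration on [0,1]: for bounded measurable F, G : [0,1] → [0,1] (extended by 0 to the left), ∫₀¹ F(x) · Φ(G)(x) dx = ∫₀¹ Φ(F)(x) · G(x) dx, where Φ(H)(x) = ∫_{[x,1]} H(z−x) dμ(z). -/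
open MeasureTheory

lemma stmt10_aux (μ : Measure ℝ) [IsProbabilityMeasure μ]
    (F G : ℝ → ℝ) (hFm : Measurable F) (hGm : Measurable G)
    (hF : ∀ x ∈ Set.Icc (0:ℝ) 1, F x ∈ Set.Icc (0:ℝ) 1)
    (hG : ∀ x ∈ Set.Icc (0:ℝ) 1, G x ∈ Set.Icc (0:ℝ) 1) :
    ∫ x in Set.Icc (0:ℝ) 1, F x * (∫ z in Set.Icc x 1, G (z - x) ∂μ) =
    ∫ z, (∫ x in Set.Icc (0:ℝ) 1, (Set.Icc x 1).indicator (fun z' => F x * G (z' - x)) z) ∂μ := by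
  have h1 : ∀ x : ℝ, F x * (∫ z in Set.Icc x 1, G (z - x) ∂μ)
      = ∫ z, (Set.Icc x 1).indicator (fun z' => F x * G (z' - x)) z ∂μ := by
    intro x
    rw [integral_indicator measurableSet_Icc, ← integral_const_mul]
  simp_rw [h1]
  refine integral_integral_swap ?_
  have hfe : (Function.uncurry fun x z => (Set.Icc x 1).indicator (fun z' => F x * G (z' - x)) z)
      = ({q : ℝ × ℝ | q.1 ≤ q.2 ∧ q.2 ≤ 1}).indicator (fun q => F q.1 * G (q.2 - q.1)) := by
    funext p
    simp [Function.uncurry, Set.indicator, Set.mem_Icc, Set.mem_setOf_eq]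
  rw [hfe]
  have hms : MeasurableSet {q : ℝ × ℝ | q.1 ≤ q.2 ∧ q.2 ≤ 1} :=
    (measurableSet_le measurable_fst measurable_snd).inter
      (measurableSet_le measurable_snd measurable_const)
  have hm : Measurable (({q : ℝ × ℝ | q.1 ≤ q.2 ∧ q.2 ≤ 1}).indicator
      (fun q => F q.1 * G (q.2 - q.1))) :=
    ((hFm.comp measurable_fst).mul (hGm.comp (measurable_snd.sub measurable_fst))).indicator hms
  refine (integrable_const (1:ℝ)).mono' hm.aestronglyMeasurable ?_
  have hae : ∀ᵐ p ∂((volume.restrict (Set.Icc (0:ℝ) 1)).prod μ), p.1 ∈ Set.Icc (0:ℝ) 1 := by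
    rw [Filter.eventually_iff, mem_ae_iff]
    have : {p : ℝ × ℝ | p.1 ∈ Set.Icc (0:ℝ) 1}ᶜ = (Set.Icc (0:ℝ) 1)ᶜ ×ˢ Set.univ := by
      ext p; simp
    rw [this, Measure.prod_prod]
    simp [Measure.restrict_apply measurableSet_Icc.compl]
  filter_upwards [hae] with p hp
  by_cases hmem : p ∈ {q : ℝ × ℝ | q.1 ≤ q.2 ∧ q.2 ≤ 1}
  · rw [Set.indicator_of_mem hmem]
    obtain ⟨h12, h21⟩ := hmem
    have hx := hF p.1 hp
    have hz : p.2 - p.1 ∈ Set.Icc (0:ℝ) 1 := by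
      constructor <;> [linarith [hp.1]; linarith [hp.1, hp.2]]
    have hg := hG _ hz
    have : |F p.1 * G (p.2 - p.1)| ≤ 1 := by
      rw [abs_mul]
      calc |F p.1| * |G (p.2-p.1)| ≤ 1 * 1 := by
            apply mul_le_mul <;> simp [abs_le] <;> constructor <;> linarith [hx.1, hx.2, hg.1, hg.2]
        _ = 1 := by ring
    simpa [Real.norm_eq_abs, abs_mul] using this
  · rw [Set.indicator_of_notMem hmem]; simp

lemma stmt10_inner (F G : ℝ → ℝ) (z : ℝ) (hz : z ∈ Set.Icc (0:ℝ) 1) :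
    (∫ x in Set.Icc (0:ℝ) 1, (Set.Icc x 1).indicator (fun z' => F x * G (z' - x)) z)
      = ∫ x in (0:ℝ)..z, F x * G (z - x) := by
  have h1 : ∀ x : ℝ, (Set.Icc x 1).indicator (fun z' => F x * G (z' - x)) z
      = (Set.Iic z).indicator (fun x => F x * G (z - x)) x := by
    intro x
    simp only [Set.indicator, Set.mem_Icc, Set.mem_Iic]
    by_cases h : x ≤ z
    · simp [h, hz.2]
    · simp [h]
  simp_rw [h1]
  rw [integral_indicator measurableSet_Iic, Measure.restrict_restrict measurableSet_Iic]
  have h2 : Set.Iic z ∩ Set.Icc (0:ℝ) 1 = Set.Icc 0 z := by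
    ext x
    simp only [Set.mem_inter_iff, Set.mem_Iic, Set.mem_Icc]
    constructor
    · rintro ⟨h, h0, _⟩; exact ⟨h0, h⟩
    · rintro ⟨h0, h⟩; exact ⟨h, h0, le_trans h hz.2⟩
  rw [h2, MeasureTheory.integral_Icc_eq_integral_Ioc,
    ← intervalIntegral.integral_of_le hz.1]

theorem stmt_10 (μ : Measure ℝ) [IsProbabilityMeasure μ]
    (hμs : μ (Set.Icc (0:ℝ) 1)ᶜ = 0)
    (F G : ℝ → ℝ) (hFm : Measurable F) (hGm : Measurable G)
    (hF : ∀ x ∈ Set.Icc (0:ℝ) 1, F x ∈ Set.Icc (0:ℝ) 1)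
    (hG : ∀ x ∈ Set.Icc (0:ℝ) 1, G x ∈ Set.Icc (0:ℝ) 1)
    (hFext : ∀ x < (0:ℝ), F x = 0) (hGext : ∀ x < (0:ℝ), G x = 0) :
    ∫ x in Set.Icc (0:ℝ) 1, F x * (∫ z in Set.Icc x 1, G (z - x) ∂μ) =
      ∫ x in Set.Icc (0:ℝ) 1, (∫ z in Set.Icc x 1, F (z - x) ∂μ) * G x := by
  have hRHS : (∫ x in Set.Icc (0:ℝ) 1, (∫ z in Set.Icc x 1, F (z - x) ∂μ) * G x)
      = ∫ x in Set.Icc (0:ℝ) 1, G x * (∫ z in Set.Icc x 1, F (z - x) ∂μ) := by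
    simp_rw [mul_comm]
  rw [hRHS, stmt10_aux μ F G hFm hGm hF hG, stmt10_aux μ G F hGm hFm hG hF]
  refine integral_congr_ae ?_
  have hae : ∀ᵐ z ∂μ, z ∈ Set.Icc (0:ℝ) 1 := by
    rw [Filter.eventually_iff, mem_ae_iff]; exact hμs
  filter_upwards [hae] with z hz
  rw [stmt10_inner F G z hz, stmt10_inner G F z hz]
  have hcv := intervalIntegral.integral_comp_sub_left (a := 0) (b := z)
    (fun x => F x * G (z - x)) z
  simp only [sub_zero, sub_self, sub_sub_cancel] at hcv
  rw [← hcv]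
  congr 1
  funext x
  ring
end

section
/- (e-cutoff, positive direction) For any Borel probability measure μ on [0,1] and any 0 < λ < e, the map T_λ(F) = exp(−λ Φ_μ(F)) on 𝓓 (nondecreasing functions [0,1] → [0,1]) has a unique fixed point which is a global attractor in the sup norm: there is F* ∈ 𝓓 with T_λ(F*) = F* and T_λⁿ(F) → F* uniformly for every F ∈ 𝓓. -/
/-!
If `F, G ∈ 𝓓` are `δ`-close on `[0, 1]`, then so are `Φ F` and `Φ G`, hence
`T F ≤ exp (λδ) T G` and `T G ≤ exp (λδ) T F`; integrating, `log Φ (T F)` and `log Φ (T G)` are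
`λδ`-close. As `s ↦ exp (-λ eˢ)` is `e⁻¹`-Lipschitz (`t e⁻ᵗ ≤ e⁻¹`), `T²` contracts the sup distance
on `[0, 1]` by `λ/e < 1`. So `|Tⁿ F - Tⁿ G| ≤ (λ/e)^⌊n/2⌋` on `𝓓`: the iterates of `1` converge
uniformly to some `F* ∈ 𝓓`, which the `λ`-Lipschitz map `T` fixes, and every orbit converges
uniformly to `F*`, which is therefore the only fixed point.
-/

open MeasureTheory Filter Set Topology Real

namespace ECutoff

section RealBounds

variable {lam : ℝ}

lemma abs_exp_neg_mul_sub_le (hlam : 0 ≤ lam) {a b : ℝ} (ha : 0 ≤ a) (hb : 0 ≤ b) :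
    |exp (-(lam * a)) - exp (-(lam * b))| ≤ lam * |a - b| := by
  have hderiv : ∀ y ∈ Ici (0:ℝ), HasDerivWithinAt (fun y => exp (-(lam * y)))
      (exp (-(lam * y)) * -lam) (Ici 0) y := fun y _ =>
    (((hasDerivAt_id' y).const_mul lam).fun_neg.exp).hasDerivWithinAt.congr_deriv (by ring)
  have hbound : ∀ y ∈ Ici (0:ℝ), ‖exp (-(lam * y)) * -lam‖ ≤ lam := fun y hy => by
    rw [norm_mul, norm_neg, Real.norm_of_nonneg hlam, Real.norm_of_nonneg (exp_pos _).le]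
    exact mul_le_of_le_one_left hlam (exp_le_one_iff.2 (by nlinarith [mem_Ici.1 hy]))
  exact Convex.norm_image_sub_le_of_norm_hasDerivWithin_le hderiv hbound (convex_Ici 0) hb ha

lemma abs_exp_neg_mul_exp_sub_le (hlam : 0 ≤ lam) (s t : ℝ) :
    |exp (-(lam * exp s)) - exp (-(lam * exp t))| ≤ exp (-1) * |s - t| := by
  have hderiv : ∀ y ∈ (univ : Set ℝ), HasDerivWithinAt (fun y => exp (-(lam * exp y)))
      (-(lam * exp y * exp (-(lam * exp y)))) univ y := fun y _ =>
    (((hasDerivAt_exp y).const_mul lam).fun_neg.exp).hasDerivWithinAt.congr_deriv (by ring)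
  have hbound : ∀ y ∈ (univ : Set ℝ), ‖-(lam * exp y * exp (-(lam * exp y)))‖ ≤ exp (-1) :=
    fun y _ => by
      rw [norm_neg, Real.norm_of_nonneg (by positivity)]
      exact mul_exp_neg_le_exp_neg_one _
  exact Convex.norm_image_sub_le_of_norm_hasDerivWithin_le hderiv hbound convex_univ trivial trivial

lemma abs_exp_neg_mul_sub_le_of_le_exp_mul (hlam : 0 ≤ lam) {P Q c : ℝ} (hc : 0 ≤ c)
    (hP : 0 ≤ P) (hQ : 0 ≤ Q) (hPQ : P ≤ exp c * Q) (hQP : Q ≤ exp c * P) :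
    |exp (-(lam * P)) - exp (-(lam * Q))| ≤ exp (-1) * c := by
  rcases hP.eq_or_lt with rfl | hP
  · obtain rfl : Q = 0 := le_antisymm (by simpa using hQP) hQ
    simpa using mul_nonneg (exp_pos (-1)).le hc
  have hQ : 0 < Q := pos_of_mul_pos_right (hP.trans_le hPQ) (exp_pos c).le
  have hlog : |log P - log Q| ≤ c := abs_sub_le_iff.2
    ⟨by linarith [(log_le_iff_le_exp hP (y := c + log Q)).2 (by rwa [exp_add, exp_log hQ])],
     by linarith [(log_le_iff_le_exp hQ (y := c + log P)).2 (by rwa [exp_add, exp_log hP])]⟩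
  calc |exp (-(lam * P)) - exp (-(lam * Q))|
      = |exp (-(lam * exp (log P))) - exp (-(lam * exp (log Q)))| := by
        rw [exp_log hP, exp_log hQ]
    _ ≤ exp (-1) * |log P - log Q| := abs_exp_neg_mul_exp_sub_le hlam _ _
    _ ≤ exp (-1) * c := mul_le_mul_of_nonneg_left hlog (exp_pos _).le

end RealBounds

/-- The paper's extension by `0` left of `0` is not needed: for `x ≥ 0`, `Φ μ F x` only reads
`F` on `[0, 1]`. -/
def 𝓓 : Set (ℝ → ℝ) := {F | MonotoneOn F (Icc 0 1) ∧ MapsTo F (Icc 0 1) (Icc 0 1)}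

noncomputable def Φ (μ : Measure ℝ) (F : ℝ → ℝ) (x : ℝ) : ℝ := ∫ z in Icc x 1, F (z - x) ∂μ

noncomputable def T (μ : Measure ℝ) (lam : ℝ) (F : ℝ → ℝ) (x : ℝ) : ℝ := exp (-(lam * Φ μ F x))

lemma one_mem_𝓓 : (1 : ℝ → ℝ) ∈ 𝓓 := ⟨monotoneOn_const, fun _ _ => ⟨zero_le_one, le_rfl⟩⟩

lemma mem_𝓓_of_tendsto {s : ℕ → ℝ → ℝ} {F : ℝ → ℝ} (hs : ∀ n, s n ∈ 𝓓)
    (hF : ∀ x ∈ Icc (0:ℝ) 1, Tendsto (fun n => s n x) atTop (𝓝 (F x))) : F ∈ 𝓓 :=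
  ⟨fun a ha b hb hab => le_of_tendsto_of_tendsto' (hF a ha) (hF b hb) fun n => (hs n).1 ha hb hab,
   fun x hx => isClosed_Icc.mem_of_tendsto (hF x hx) (Eventually.of_forall fun n => (hs n).2 hx)⟩

lemma sub_mem_Icc_zero_one {x z : ℝ} (hx : 0 ≤ x) (hz : z ∈ Icc x 1) : z - x ∈ Icc (0:ℝ) 1 :=
  ⟨sub_nonneg.2 hz.1, by linarith [hz.2]⟩

section Phi

variable {μ : Measure ℝ} {F G : ℝ → ℝ} {x : ℝ}

lemma integrableOn_comp_sub [IsFiniteMeasure μ] (hF : MonotoneOn F (Icc 0 1)) (hx : 0 ≤ x) :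
    IntegrableOn (fun z => F (z - x)) (Icc x 1) μ :=
  MonotoneOn.integrableOn_isCompact isCompact_Icc fun _ ha _ hb hab =>
    hF (sub_mem_Icc_zero_one hx ha) (sub_mem_Icc_zero_one hx hb) (by linarith)

lemma Φ_nonneg (hF : ∀ y ∈ Icc (0:ℝ) 1, 0 ≤ F y) (hx : 0 ≤ x) : 0 ≤ Φ μ F x :=
  setIntegral_nonneg measurableSet_Icc fun _ hz => hF _ (sub_mem_Icc_zero_one hx hz)

lemma Φ_congr (h : EqOn F G (Icc 0 1)) (hx : 0 ≤ x) : Φ μ F x = Φ μ G x :=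
  setIntegral_congr_fun measurableSet_Icc fun _ hz => h (sub_mem_Icc_zero_one hx hz)

lemma Φ_le_mul_Φ [IsFiniteMeasure μ] {c : ℝ} (hF : MonotoneOn F (Icc 0 1))
    (hG : MonotoneOn G (Icc 0 1)) (h : ∀ y ∈ Icc (0:ℝ) 1, F y ≤ c * G y) (hx : 0 ≤ x) :
    Φ μ F x ≤ c * Φ μ G x := by
  rw [Φ, Φ, ← integral_const_mul]
  exact setIntegral_mono_on (integrableOn_comp_sub hF hx)
    ((integrableOn_comp_sub hG hx).const_mul c) measurableSet_Icc
    fun _ hz => h _ (sub_mem_Icc_zero_one hx hz)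

lemma abs_Φ_sub_Φ_le [IsProbabilityMeasure μ] {δ : ℝ} (hF : MonotoneOn F (Icc 0 1))
    (hG : MonotoneOn G (Icc 0 1)) (h : ∀ y ∈ Icc (0:ℝ) 1, |F y - G y| ≤ δ) (hx : 0 ≤ x) :
    |Φ μ F x - Φ μ G x| ≤ δ := by
  have hδ : 0 ≤ δ := (abs_nonneg _).trans (h 0 ⟨le_rfl, zero_le_one⟩)
  rw [Φ, Φ, ← integral_sub (integrableOn_comp_sub hF hx) (integrableOn_comp_sub hG hx)]
  calc |∫ z in Icc x 1, (F (z - x) - G (z - x)) ∂μ|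
      ≤ δ * μ.real (Icc x 1) :=
        norm_setIntegral_le_of_norm_le_const (f := fun z => F (z - x) - G (z - x))
          (measure_lt_top μ _) fun _ hz => h _ (sub_mem_Icc_zero_one hx hz)
    _ ≤ δ := mul_le_of_le_one_right hδ measureReal_le_one

lemma antitoneOn_Φ [IsFiniteMeasure μ] (hF : F ∈ 𝓓) : AntitoneOn (Φ μ F) (Icc 0 1) := by
  intro x hx y hy hxy
  calc Φ μ F y ≤ ∫ z in Icc y 1, F (z - x) ∂μ :=
        setIntegral_mono_on (integrableOn_comp_sub hF.1 hy.1)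
          ((integrableOn_comp_sub hF.1 hx.1).mono_set (Icc_subset_Icc_left hxy)) measurableSet_Icc
          fun z hz => hF.1 (sub_mem_Icc_zero_one hy.1 hz)
            (sub_mem_Icc_zero_one hx.1 ⟨hxy.trans hz.1, hz.2⟩) (by linarith)
    _ ≤ Φ μ F x :=
        setIntegral_mono_set (integrableOn_comp_sub hF.1 hx.1)
          ((ae_restrict_mem measurableSet_Icc).mono fun z hz =>
            (hF.2 (sub_mem_Icc_zero_one hx.1 hz)).1)
          (Icc_subset_Icc_left hxy).eventuallyLE

end Phi

section Operator

variable {μ : Measure ℝ} {lam : ℝ} {F G : ℝ → ℝ} {x : ℝ}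

lemma T_eqOn_of_eqOn (h : EqOn F G (Icc 0 1)) : EqOn (T μ lam F) (T μ lam G) (Icc 0 1) :=
  fun _ hx => by rw [T, T, Φ_congr h hx.1]

lemma iterate_T_eqOn_self (h : EqOn (T μ lam F) F (Icc 0 1)) (n : ℕ) :
    EqOn ((T μ lam)^[n] F) F (Icc 0 1) := by
  induction n with
  | zero => exact eqOn_refl _ _
  | succ n ih => intro x hx; rw [Function.iterate_succ_apply', T_eqOn_of_eqOn ih hx, h hx]

lemma mapsTo_T [IsFiniteMeasure μ] (hlam : 0 ≤ lam) : MapsTo (T μ lam) 𝓓 𝓓 := fun _ hF =>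
  ⟨fun _ hx _ hy hxy => exp_le_exp.2 <| neg_le_neg <|
      mul_le_mul_of_nonneg_left (antitoneOn_Φ hF hx hy hxy) hlam,
   fun _ hx => ⟨(exp_pos _).le, exp_le_one_iff.2 <| neg_nonpos.2 <|
      mul_nonneg hlam (Φ_nonneg (fun _ hy => (hF.2 hy).1) hx.1)⟩⟩

variable [IsProbabilityMeasure μ] {δ : ℝ}

lemma abs_T_sub_T_le (hlam : 0 ≤ lam) (hF : F ∈ 𝓓) (hG : G ∈ 𝓓)
    (h : ∀ y ∈ Icc (0:ℝ) 1, |F y - G y| ≤ δ) (hx : 0 ≤ x) :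
    |T μ lam F x - T μ lam G x| ≤ lam * δ :=
  (abs_exp_neg_mul_sub_le hlam (Φ_nonneg (fun _ hy => (hF.2 hy).1) hx)
    (Φ_nonneg (fun _ hy => (hG.2 hy).1) hx)).trans <|
    mul_le_mul_of_nonneg_left (abs_Φ_sub_Φ_le hF.1 hG.1 h hx) hlam

lemma T_le_exp_mul_T (hlam : 0 ≤ lam) (hF : F ∈ 𝓓) (hG : G ∈ 𝓓)
    (h : ∀ y ∈ Icc (0:ℝ) 1, |F y - G y| ≤ δ) (hx : 0 ≤ x) :
    T μ lam F x ≤ exp (lam * δ) * T μ lam G x := by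
  have hΦ := (abs_le.1 (abs_Φ_sub_Φ_le (μ := μ) hF.1 hG.1 h hx)).1
  rw [T, T, ← exp_add]
  exact exp_le_exp.2 (by nlinarith)

lemma abs_T_T_sub_T_T_le (hlam : 0 ≤ lam) (hF : F ∈ 𝓓) (hG : G ∈ 𝓓)
    (h : ∀ y ∈ Icc (0:ℝ) 1, |F y - G y| ≤ δ) (hx : 0 ≤ x) :
    |T μ lam (T μ lam F) x - T μ lam (T μ lam G) x| ≤ exp (-1) * lam * δ := by
  have hδ : 0 ≤ δ := (abs_nonneg _).trans (h 0 ⟨le_rfl, zero_le_one⟩)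
  have hTF := mapsTo_T (μ := μ) hlam hF
  have hTG := mapsTo_T (μ := μ) hlam hG
  rw [mul_assoc]
  exact abs_exp_neg_mul_sub_le_of_le_exp_mul hlam (mul_nonneg hlam hδ)
    (Φ_nonneg (fun _ hy => (hTF.2 hy).1) hx) (Φ_nonneg (fun _ hy => (hTG.2 hy).1) hx)
    (Φ_le_mul_Φ hTF.1 hTG.1 (fun _ hy => T_le_exp_mul_T hlam hF hG h hy.1) hx)
    (Φ_le_mul_Φ hTG.1 hTF.1 (fun y hy => T_le_exp_mul_T hlam hG hF
      (fun y hy => abs_sub_comm (F y) (G y) ▸ h y hy) hy.1) hx)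

lemma abs_iterate_two_mul_T_sub_le (hlam : 0 ≤ lam) (hF : F ∈ 𝓓) (hG : G ∈ 𝓓) (k : ℕ)
    (hx : x ∈ Icc (0:ℝ) 1) :
    |(T μ lam)^[2 * k] F x - (T μ lam)^[2 * k] G x| ≤ (exp (-1) * lam) ^ k := by
  induction k generalizing x with
  | zero => simpa [← Real.dist_eq] using Real.dist_le_of_mem_Icc_01 (hF.2 hx) (hG.2 hx)
  | succ k ih =>
    rw [show 2 * (k + 1) = 2 + 2 * k by ring, Function.iterate_add_apply,
      Function.iterate_add_apply, pow_succ']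
    exact abs_T_T_sub_T_T_le hlam ((mapsTo_T hlam).iterate _ hF) ((mapsTo_T hlam).iterate _ hG)
      (fun _ hy => ih hy) hx.1

lemma abs_iterate_T_sub_le (hlam : 0 ≤ lam) (hF : F ∈ 𝓓) (hG : G ∈ 𝓓) (n : ℕ)
    (hx : x ∈ Icc (0:ℝ) 1) :
    |(T μ lam)^[n] F x - (T μ lam)^[n] G x| ≤ (exp (-1) * lam) ^ (n / 2) := by
  obtain ⟨k, rfl | rfl⟩ := n.even_or_odd'
  · rw [show 2 * k / 2 = k by omega]
    exact abs_iterate_two_mul_T_sub_le hlam hF hG k hx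
  · rw [show (2 * k + 1) / 2 = k by omega, Function.iterate_succ_apply,
      Function.iterate_succ_apply]
    exact abs_iterate_two_mul_T_sub_le hlam (mapsTo_T hlam hF) (mapsTo_T hlam hG) k hx

end Operator

lemma tendsto_limUnder_of_abs_sub_le {s b : ℕ → ℝ} (hb : Tendsto b atTop (𝓝 0))
    (h : ∀ n m, n ≤ m → |s m - s n| ≤ b n) :
    Tendsto s atTop (𝓝 (limUnder atTop s)) ∧ ∀ n, |limUnder atTop s - s n| ≤ b n := by
  have hs : Tendsto s atTop (𝓝 (limUnder atTop s)) :=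
    (cauchySeq_of_le_tendsto_0' b (fun n m hnm => by rw [dist_comm]; exact h n m hnm) hb
      ).tendsto_limUnder
  exact ⟨hs, fun n => le_of_tendsto ((hs.sub_const (s n)).abs)
    ((eventually_ge_atTop n).mono fun m hm => h n m hm)⟩

lemma tendsto_exp_neg_one_mul_pow_div_two {lam : ℝ} (hlam : 0 ≤ lam) (he : lam < exp 1) :
    Tendsto (fun n : ℕ => (exp (-1) * lam) ^ (n / 2)) atTop (𝓝 0) := by
  have hq : exp (-1) * lam < 1 := by
    calc exp (-1) * lam < exp (-1) * exp 1 := mul_lt_mul_of_pos_left he (exp_pos _)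
      _ = 1 := by rw [← exp_add]; norm_num
  exact (tendsto_pow_atTop_nhds_zero_of_lt_one (by positivity) hq).comp
    (Nat.tendsto_div_const_atTop two_ne_zero)

section FixedPoint

variable {μ : Measure ℝ} [IsProbabilityMeasure μ] {lam : ℝ}

theorem exists_mem_𝓓_eqOn_T (hlam : 0 ≤ lam) (he : lam < exp 1) :
    ∃ F ∈ 𝓓, EqOn (T μ lam F) F (Icc 0 1) := by
  have hq := tendsto_exp_neg_one_mul_pow_div_two hlam he
  set s : ℕ → ℝ → ℝ := fun n => (T μ lam)^[n] 1
  have hs : ∀ n, s n ∈ 𝓓 := fun n => (mapsTo_T hlam).iterate n one_mem_𝓓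
  have hs_add : ∀ n k, s (n + k) = (T μ lam)^[n] (s k) := fun _ _ => Function.iterate_add_apply ..
  have hs_succ : ∀ n, s (n + 1) = T μ lam (s n) := fun _ => Function.iterate_succ_apply' ..
  have hcauchy : ∀ x ∈ Icc (0:ℝ) 1, ∀ n m, n ≤ m →
      |s m x - s n x| ≤ (exp (-1) * lam) ^ (n / 2) := by
    intro x hx n m hnm
    obtain ⟨k, rfl⟩ := Nat.exists_eq_add_of_le hnm
    rw [hs_add]
    exact abs_iterate_T_sub_le hlam (hs k) one_mem_𝓓 n hx
  have hlim := fun x hx => tendsto_limUnder_of_abs_sub_le hq (hcauchy x hx)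
  set Fstar : ℝ → ℝ := fun x => limUnder atTop fun n => s n x
  have hFstar : Fstar ∈ 𝓓 := mem_𝓓_of_tendsto hs fun x hx => (hlim x hx).1
  refine ⟨Fstar, hFstar, fun x hx => tendsto_nhds_unique ?_ ((hlim x hx).1.comp
    (tendsto_add_atTop_nat 1))⟩
  refine tendsto_iff_norm_sub_tendsto_zero.2 (squeeze_zero (fun _ => norm_nonneg _) (fun n => ?_)
    (by simpa using hq.const_mul lam))
  rw [Function.comp_apply, hs_succ, Real.norm_eq_abs, abs_sub_comm]
  exact abs_T_sub_T_le hlam hFstar (hs n) (fun y hy => (hlim y hy).2 n) hx.1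

lemma tendsto_iSup_abs_iterate_T_sub (hlam : 0 ≤ lam) (he : lam < exp 1) {F G : ℝ → ℝ}
    (hF : F ∈ 𝓓) (hG : G ∈ 𝓓) (hGT : EqOn (T μ lam G) G (Icc 0 1)) :
    Tendsto (fun n => ⨆ x : Icc (0:ℝ) 1, |(T μ lam)^[n] F x - G x|) atTop (𝓝 0) :=
  squeeze_zero (fun _ => Real.iSup_nonneg fun _ => abs_nonneg _)
    (fun n => Real.iSup_le (fun x => by
        rw [← iterate_T_eqOn_self hGT n x.2]; exact abs_iterate_T_sub_le hlam hF hG n x.2)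
      (by positivity))
    (tendsto_exp_neg_one_mul_pow_div_two hlam he)

lemma eqOn_of_eqOn_T (hlam : 0 ≤ lam) (he : lam < exp 1) {F G : ℝ → ℝ} (hF : F ∈ 𝓓)
    (hG : G ∈ 𝓓) (hFT : EqOn (T μ lam F) F (Icc 0 1)) (hGT : EqOn (T μ lam G) G (Icc 0 1)) :
    EqOn F G (Icc 0 1) := fun x hx => by
  have hle : ∀ n, |F x - G x| ≤ (exp (-1) * lam) ^ (n / 2) := fun n => by
    rw [← iterate_T_eqOn_self hFT n hx, ← iterate_T_eqOn_self hGT n hx]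
    exact abs_iterate_T_sub_le hlam hF hG n hx
  exact sub_eq_zero.1 <| abs_nonpos_iff.1 <|
    ge_of_tendsto' (tendsto_exp_neg_one_mul_pow_div_two hlam he) hle

end FixedPoint

end ECutoff

theorem stmt_13_general (μ : Measure ℝ) [IsProbabilityMeasure μ]
    (lam : ℝ) (h0 : 0 < lam) (he : lam < Real.exp 1) :
    let T : (ℝ → ℝ) → (ℝ → ℝ) :=
      fun F x => Real.exp (-(lam * ∫ z in Set.Icc x 1, F (z - x) ∂μ));
    ∃ Fstar : ℝ → ℝ,
      (MonotoneOn Fstar (Set.Icc 0 1) ∧ ∀ x ∈ Set.Icc (0:ℝ) 1, Fstar x ∈ Set.Icc (0:ℝ) 1) ∧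
      Set.EqOn (T Fstar) Fstar (Set.Icc 0 1) ∧
      (∀ F : ℝ → ℝ, MonotoneOn F (Set.Icc 0 1) →
        (∀ x ∈ Set.Icc (0:ℝ) 1, F x ∈ Set.Icc (0:ℝ) 1) →
        Tendsto (fun n => ⨆ x : Set.Icc (0:ℝ) 1, |T^[n] F x - Fstar x|) atTop (nhds 0)) ∧
      (∀ G : ℝ → ℝ, MonotoneOn G (Set.Icc 0 1) →
        (∀ x ∈ Set.Icc (0:ℝ) 1, G x ∈ Set.Icc (0:ℝ) 1) →
        Set.EqOn (T G) G (Set.Icc 0 1) → Set.EqOn G Fstar (Set.Icc 0 1)) := by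
  intro T
  obtain ⟨Fstar, hFstar, hfix⟩ := ECutoff.exists_mem_𝓓_eqOn_T (μ := μ) h0.le he
  exact ⟨Fstar, hFstar, hfix,
    fun F hFm hFv => ECutoff.tendsto_iSup_abs_iterate_T_sub h0.le he ⟨hFm, hFv⟩ hFstar hfix,
    fun G hGm hGv hGT => ECutoff.eqOn_of_eqOn_T h0.le he ⟨hGm, hGv⟩ hFstar hGT hfix⟩

theorem stmt_13 (μ : Measure ℝ) [IsProbabilityMeasure μ]
    (hμs : μ (Set.Icc (0:ℝ) 1)ᶜ = 0)
    (lam : ℝ) (h0 : 0 < lam) (he : lam < Real.exp 1) :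
    let T : (ℝ → ℝ) → (ℝ → ℝ) :=
      fun F x => Real.exp (-(lam * ∫ z in Set.Icc x 1, F (z - x) ∂μ));
    ∃ Fstar : ℝ → ℝ,
      (MonotoneOn Fstar (Set.Icc 0 1) ∧ ∀ x ∈ Set.Icc (0:ℝ) 1, Fstar x ∈ Set.Icc (0:ℝ) 1) ∧
      Set.EqOn (T Fstar) Fstar (Set.Icc 0 1) ∧
      (∀ F : ℝ → ℝ, MonotoneOn F (Set.Icc 0 1) →
        (∀ x ∈ Set.Icc (0:ℝ) 1, F x ∈ Set.Icc (0:ℝ) 1) →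
        Tendsto (fun n => ⨆ x : Set.Icc (0:ℝ) 1, |T^[n] F x - Fstar x|) atTop (nhds 0)) ∧
      (∀ G : ℝ → ℝ, MonotoneOn G (Set.Icc 0 1) →
        (∀ x ∈ Set.Icc (0:ℝ) 1, G x ∈ Set.Icc (0:ℝ) 1) →
        Set.EqOn (T G) G (Set.Icc 0 1) → Set.EqOn G Fstar (Set.Icc 0 1)) :=
  stmt_13_general μ lam h0 he
end

section
/- Fix λ > 0 and let A ≥ 1 be a solution of e^{Aλ}(A−1)² = 1. Then the function F(x) = A e^{Aλx} / (e^{Aλ}(A−1) + e^{Aλx}) on [0,1] satisfies F(1) = 1, F is nondecreasing with values in [0,1], and F is a fixed point of the map T(F)(x) = exp(−λ ∫₀^{1−x} F(z) dz). -/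
/-!
Write `k = Aλ` and `c = e^{k}(A - 1)`, so that `F(x) = A e^{kx} / (c + e^{kx})`. Since
`λ F` is the derivative of `log (c + e^{kx})`, the integral in `T(F)` is explicit and
`T(F)(x) = (c + 1) / (c + e^{k(1-x)})`. The defining equation of `A` says `c (A - 1) = 1`
and `c² = e^{k}`, which is exactly what makes this equal to `F(x)`.
-/

open Real

noncomputable section

def logistic (A c k x : ℝ) : ℝ := A * exp (k * x) / (c + exp (k * x))

section Logistic

variable {A c k : ℝ}

lemma const_add_exp_pos (hc : 0 ≤ c) (k x : ℝ) : 0 < c + exp (k * x) := by positivity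

lemma logistic_nonneg (hA : 0 ≤ A) (hc : 0 ≤ c) (x : ℝ) : 0 ≤ logistic A c k x :=
  div_nonneg (by positivity) (const_add_exp_pos hc k x).le

lemma monotone_logistic (hA : 0 ≤ A) (hc : 0 ≤ c) (hk : 0 ≤ k) : Monotone (logistic A c k) := by
  intro x y hxy
  have hexp : exp (k * x) ≤ exp (k * y) := exp_le_exp.mpr (mul_le_mul_of_nonneg_left hxy hk)
  rw [logistic, logistic, div_le_div_iff₀ (const_add_exp_pos hc k x) (const_add_exp_pos hc k y)]
  nlinarith [mul_nonneg (mul_nonneg hA hc) (sub_nonneg.mpr hexp)]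

lemma logistic_one (hA : A ≠ 0) (k : ℝ) : logistic A (exp k * (A - 1)) k 1 = 1 := by
  rw [logistic, mul_one, div_eq_one_iff_eq (by simpa [mul_sub] using mul_ne_zero hA (exp_pos k).ne')]
  ring

lemma continuous_logistic (hc : 0 ≤ c) : Continuous (logistic A c k) :=
  Continuous.div (by fun_prop) (by fun_prop) fun x => (const_add_exp_pos hc k x).ne'

lemma hasDerivAt_log_const_add_exp (hc : 0 ≤ c) (k t : ℝ) :
    HasDerivAt (fun z => log (c + exp (k * z))) (logistic k c k t) t := by
  have hlin : HasDerivAt (fun z => k * z) k t := by simpa using (hasDerivAt_id t).const_mul k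
  convert (hlin.exp.const_add c).log (const_add_exp_pos hc k t).ne' using 1
  rw [logistic, mul_comm]

lemma integral_logistic_self (hc : 0 ≤ c) (k a b : ℝ) :
    ∫ z in a..b, logistic k c k z = log (c + exp (k * b)) - log (c + exp (k * a)) :=
  intervalIntegral.integral_eq_sub_of_hasDerivAt (fun t _ => hasDerivAt_log_const_add_exp hc k t)
    ((continuous_logistic hc).intervalIntegrable a b)

end Logistic

theorem exp_neg_integral_logistic {lam A : ℝ} (hA : 1 ≤ A)
    (heq : exp (A * lam) * (A - 1) ^ 2 = 1) (x : ℝ) :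
    exp (-(lam * ∫ z in (0 : ℝ)..(1 - x), logistic A (exp (A * lam) * (A - 1)) (A * lam) z)) =
      logistic A (exp (A * lam) * (A - 1)) (A * lam) x := by
  set k := A * lam
  set c := exp k * (A - 1)
  have hc : 0 ≤ c := mul_nonneg (exp_pos k).le (sub_nonneg.mpr hA)
  have hintegral : lam * ∫ z in (0 : ℝ)..(1 - x), logistic A c k z =
      log (c + exp (k * (1 - x))) - log (c + 1) := by
    have hscale : (fun z => lam * logistic A c k z) = logistic k c k := by
      ext z
      simp only [logistic, k]
      ring
    rw [← intervalIntegral.integral_const_mul, hscale, integral_logistic_self hc, mul_zero, exp_zero]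
  have hexp_add : exp (k * (1 - x)) * exp (k * x) = exp k := by rw [← exp_add]; ring_nf
  rw [hintegral, neg_sub, exp_sub, exp_log (by positivity), exp_log (const_add_exp_pos hc k _),
    logistic, div_eq_div_iff (const_add_exp_pos hc k _).ne' (const_add_exp_pos hc k x).ne']
  linear_combination (exp k - exp (k * x)) * heq - A * hexp_add

theorem stmt_15 (lam A : ℝ) (hlam : 0 < lam) (hA : 1 ≤ A)
    (heq : Real.exp (A * lam) * (A - 1)^2 = 1) :
    let F : ℝ → ℝ := fun x =>
      A * Real.exp (A * lam * x) / (Real.exp (A * lam) * (A - 1) + Real.exp (A * lam * x));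
    F 1 = 1 ∧ MonotoneOn F (Set.Icc 0 1) ∧
    (∀ x ∈ Set.Icc (0:ℝ) 1, F x ∈ Set.Icc (0:ℝ) 1) ∧
    ∀ x ∈ Set.Icc (0:ℝ) 1, Real.exp (-(lam * ∫ z in (0:ℝ)..(1 - x), F z)) = F x := by
  intro F
  have hc : 0 ≤ exp (A * lam) * (A - 1) := mul_nonneg (exp_pos _).le (sub_nonneg.mpr hA)
  have hmono : Monotone F := monotone_logistic (by linarith) hc (by positivity)
  have hF1 : F 1 = 1 := logistic_one (by linarith) (A * lam)
  exact ⟨hF1, hmono.monotoneOn _, fun x hx => ⟨logistic_nonneg (by linarith) hc x, hF1 ▸ hmono hx.2⟩,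
    fun x _ => exp_neg_integral_logistic hA heq x⟩

end
end

section
/- For every λ > 0, the equation λ(1 − e^{−K})/K = K has a unique positive solution K(λ); moreover the real map f(K) = λ(1 − e^{−K})/K on (0,∞) has no periodic points of proper period 2: f(f(K)) = K implies f(K) = K. -/
/-!
For `K > 0` the fixed-point equation `f K = K` reads `λ (1 - e^{-K}) = K²`. The difference of the
two sides is strictly concave and vanishes at `0`, so it has at most one positive zero; it is
positive near `0` and negative at `λ + 1`, so it has one. If `f` maps `K` to `L` and `L` back to
`K`, then `λ (1 - e^{-L}) = K L = λ (1 - e^{-K})`, and injectivity of `x ↦ λ (1 - e^{-x})` gives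
`L = K`.
-/

open Real Set Function

theorem StrictConcaveOn.eq_of_map_eq_zero {f : ℝ → ℝ} (hf : StrictConcaveOn ℝ (Ici 0) f)
    (h0 : f 0 = 0) {x y : ℝ} (hx : 0 < x) (hy : 0 < y) (hfx : f x = 0) (hfy : f y = 0) :
    x = y := by
  wlog hxy : x < y generalizing x y
  · rcases (not_lt.1 hxy).lt_or_eq with h | h
    · exact (this hy hx hfy hfx h).symm
    · exact h.symm
  have hmem : x ∈ openSegment ℝ 0 y := by rw [openSegment_eq_Ioo hy]; exact ⟨hx, hxy⟩
  have := hf.lt_on_openSegment (mem_Ici.2 le_rfl) hy.le hy.ne hmem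
  simp [h0, hfx, hfy] at this

theorem eq_of_div_self_comp_div_self {K : Type*} [Field K] {φ : K → K} (hφ : Injective φ)
    {x : K} (hx : φ x / x ≠ 0) (h : φ (φ x / x) / (φ x / x) = x) : φ x / x = x := by
  have hx0 : x ≠ 0 := by rintro rfl; simp at hx
  refine hφ ?_
  rw [div_eq_iff hx] at h
  rw [h, mul_div_cancel₀ (φ x) hx0]

theorem strictConcaveOn_mul_one_sub_exp_neg_sub_sq {lam : ℝ} (hlam : 0 ≤ lam) :
    StrictConcaveOn ℝ univ fun x => lam * (1 - exp (-x)) - x ^ 2 := by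
  have hexp : ConvexOn ℝ univ fun x : ℝ => exp (-x) :=
    convexOn_exp.comp_linearMap (-LinearMap.id)
  have hφ : ConcaveOn ℝ univ fun x : ℝ => lam * (1 - exp (-x)) :=
    ((hexp.neg.add_const 1).smul hlam).congr fun x _ => by
      simp only [Pi.add_apply, Pi.neg_apply, smul_eq_mul]
      ring
  exact hφ.sub_strictConvexOn (Even.strictConvexOn_pow even_two two_ne_zero)

theorem injective_mul_one_sub_exp_neg {lam : ℝ} (hlam : lam ≠ 0) :
    Injective fun x => lam * (1 - exp (-x)) := fun x y h => by
  simpa using (mul_right_injective₀ hlam h)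

theorem exists_pos_mul_one_sub_exp_neg_eq_sq {lam : ℝ} (hlam : 0 < lam) :
    ∃ K, 0 < K ∧ lam * (1 - exp (-K)) = K ^ 2 := by
  set a := min 1 (lam / 2)
  have ha : 0 < a := by positivity
  have ha1 : a ≤ 1 := min_le_left _ _
  have ha2 : a ≤ lam / 2 := min_le_right _ _
  have hpos : 0 < lam * (1 - exp (-a)) - a ^ 2 := by
    have : (1 + a) * exp (-a) < 1 :=
      calc (1 + a) * exp (-a) < exp a * exp (-a) :=
            mul_lt_mul_of_pos_right (by linarith [add_one_lt_exp ha.ne']) (exp_pos _)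
        _ = 1 := by rw [← exp_add, add_neg_cancel, exp_zero]
    -- `λ (1 - e^{-a}) > λ a / (1 + a) ≥ a²`, since `a (1 + a) ≤ 2 a ≤ λ`
    nlinarith
  have hneg : lam * (1 - exp (-(lam + 1))) - (lam + 1) ^ 2 < 0 := by
    nlinarith [exp_pos (-(lam + 1))]
  obtain ⟨K, hK, hK0⟩ := intermediate_value_Ioo' (by linarith : a ≤ lam + 1)
    (by fun_prop : Continuous fun x => lam * (1 - exp (-x)) - x ^ 2).continuousOn ⟨hneg, hpos⟩
  exact ⟨K, ha.trans hK.1, sub_eq_zero.1 hK0⟩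

theorem stmt_18 (lam : ℝ) (hlam : 0 < lam) :
    (∃! K : ℝ, 0 < K ∧ lam * (1 - Real.exp (-K)) / K = K) ∧
    (∀ K : ℝ, 0 < K →
      (fun J => lam * (1 - Real.exp (-J)) / J)
          ((fun J => lam * (1 - Real.exp (-J)) / J) K) = K →
      lam * (1 - Real.exp (-K)) / K = K) := by
  have hfix {K : ℝ} (hK : 0 < K) :
      lam * (1 - exp (-K)) / K = K ↔ lam * (1 - exp (-K)) = K ^ 2 := by
    rw [div_eq_iff hK.ne', sq]
  have hconc := (strictConcaveOn_mul_one_sub_exp_neg_sub_sq hlam.le).subset (subset_univ _)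
    (convex_Ici 0)
  obtain ⟨K, hK, hKeq⟩ := exists_pos_mul_one_sub_exp_neg_eq_sq hlam
  refine ⟨⟨K, ⟨hK, (hfix hK).2 hKeq⟩, fun L ⟨hL, hLeq⟩ => ?_⟩, fun K hK h => ?_⟩
  · exact hconc.eq_of_map_eq_zero (by simp) hL hK (sub_eq_zero.2 ((hfix hL).1 hLeq))
      (sub_eq_zero.2 hKeq)
  · have hexp : exp (-K) < 1 := exp_lt_one_iff.2 (neg_lt_zero.2 hK)
    exact eq_of_div_self_comp_div_self (injective_mul_one_sub_exp_neg hlam.ne')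
      (div_pos (mul_pos hlam (sub_pos.2 hexp)) hK).ne' h
end

section
/- For the real map f(x) = e^{−λx} with λ > 0: (i) f has a unique fixed point M = M(λ) in (0,1); (ii) if 0 < λ ≤ e then M is a global attractor, i.e., fⁿ(x) → M for every x ≥ 0 (equivalently f(f(x)) − x has the same sign as M − x for x ≠ M); (iii) if λ > e then |f'(M)| > 1, M is repelling, and f has a period-2 orbit {L, U} with L < M < U which attracts every x ≠ M. The critical transition occurs at λ = e, M = 1/e, where f'(M) = −1. -/
/-!
Since `f` is decreasing, `f ∘ f` is increasing, so every orbit of `f ∘ f` is monotone and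
converges to the first fixed point of `f ∘ f` in the direction in which it moves. Everything thus
reduces to the sign of `D x = f (f x) - x`, whose derivative is `λ u e^{-u} - 1` with `u = λ f x`.
As `u e^{-u} ≤ e^{-1}`, with equality only at `u = 1`, for `λ ≤ e` the function `D` is strictly
decreasing and `M` is its only zero. For `λ > e` one has `λ M > 1`, so `D' M = (λ M)² - 1 > 0`,
and `D` is strictly convex on `(-∞, M]`, because there `u > 1`, where `u e^{-u}` decreases; hence
`D` has exactly one zero `L` in `[0, M)`. Since `f` reverses order and commutes with `f ∘ f`,
`D (f x)` and `D x` have opposite signs, which carries the sign pattern of `D` on `[0, M)` over to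
`(M, ∞)`, with `U = f L`.
-/

open Filter Real Set Topology Function

section Iteration

variable {α : Type*} [ConditionallyCompleteLinearOrder α] [TopologicalSpace α] [OrderTopology α]
  {g : α → α} {x p : α}

theorem Monotone.tendsto_iterate_of_forall_lt_map (hmono : Monotone g) (hg : Continuous g)
    (hp : g p = p) (hxp : x ≤ p) (h : ∀ c ∈ Ico x p, c < g c) :
    Tendsto (fun n => g^[n] x) atTop (𝓝 p) := by
  have hx : x ≤ g x := by
    rcases hxp.eq_or_lt with rfl | hlt
    · exact hp.ge
    · exact (h x ⟨le_rfl, hlt⟩).le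
  have hle : ∀ n, g^[n] x ≤ p := fun n => iterate_fixed hp n ▸ hmono.iterate n hxp
  have hbdd : BddAbove (range fun n => g^[n] x) := ⟨p, forall_mem_range.2 hle⟩
  have hlim := tendsto_atTop_ciSup (hmono.monotone_iterate_of_le_map hx) hbdd
  have hfix : IsFixedPt g (⨆ n, g^[n] x) := isFixedPt_of_tendsto_iterate hlim hg.continuousAt
  have hsup : (⨆ n, g^[n] x) = p := by
    by_contra hne
    exact (h _ ⟨le_ciSup hbdd 0, (ciSup_le hle).lt_of_ne hne⟩).ne' hfix
  rwa [hsup] at hlim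

theorem Monotone.tendsto_iterate_of_forall_map_lt (hmono : Monotone g) (hg : Continuous g)
    (hp : g p = p) (hpx : p ≤ x) (h : ∀ c ∈ Ioc p x, g c < c) :
    Tendsto (fun n => g^[n] x) atTop (𝓝 p) :=
  Monotone.tendsto_iterate_of_forall_lt_map (α := αᵒᵈ) hmono.dual hg hp hpx
    fun c hc => h c ⟨hc.2, hc.1⟩

theorem Monotone.tendsto_iterate_of_moves_toward (hmono : Monotone g) (hg : Continuous g)
    (hp : g p = p) (hlt : ∀ c ∈ Ico x p, c < g c) (hgt : ∀ c ∈ Ioc p x, g c < c) :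
    Tendsto (fun n => g^[n] x) atTop (𝓝 p) := by
  rcases le_total x p with hxp | hpx
  · exact hmono.tendsto_iterate_of_forall_lt_map hg hp hxp hlt
  · exact hmono.tendsto_iterate_of_forall_map_lt hg hp hpx hgt

theorem Antitone.tendsto_iterate_even_odd {f : α → α} (hanti : Antitone f) (hf : Continuous f)
    (hp : f^[2] p = p) (hlt : ∀ c ∈ Ico x p, c < f^[2] c) (hgt : ∀ c ∈ Ioc p x, f^[2] c < c) :
    Tendsto (fun n => f^[2 * n] x) atTop (𝓝 p) ∧
      Tendsto (fun n => f^[2 * n + 1] x) atTop (𝓝 (f p)) := by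
  have heven : Tendsto (fun n => f^[2 * n] x) atTop (𝓝 p) := by
    simp only [iterate_mul]
    exact (hanti.comp hanti).tendsto_iterate_of_moves_toward (hf.iterate 2) hp hlt hgt
  refine ⟨heven, ?_⟩
  simp only [iterate_succ_apply']
  exact (hf.tendsto p).comp heven

end Iteration

theorem tendsto_of_tendsto_even_odd {β : Type*} {a : ℕ → β} {l : Filter β}
    (heven : Tendsto (fun n => a (2 * n)) atTop l)
    (hodd : Tendsto (fun n => a (2 * n + 1)) atTop l) : Tendsto a atTop l := by
  intro s hs
  obtain ⟨N₀, h₀⟩ := eventually_atTop.1 (heven hs)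
  obtain ⟨N₁, h₁⟩ := eventually_atTop.1 (hodd hs)
  refine eventually_atTop.2 ⟨2 * (N₀ + N₁) + 1, fun n hn => ?_⟩
  obtain ⟨k, rfl | rfl⟩ := Nat.even_or_odd' n
  · exact h₀ k (by omega)
  · exact h₁ k (by omega)

theorem HasDerivAt.exists_mem_Ioo_lt_of_pos {φ : ℝ → ℝ} {φ' a b : ℝ} (hφ : HasDerivAt φ φ' b)
    (hpos : 0 < φ') (hab : a < b) : ∃ t ∈ Ioo a b, φ t < φ b := by
  have hslope : ∀ᶠ t in 𝓝[<] b, 0 < slope φ b t :=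
    (hasDerivAt_iff_tendsto_slope_left_right.1 hφ).1.eventually (lt_mem_nhds hpos)
  obtain ⟨t, ht, hs⟩ := ((eventually_mem_set.2 (Ioo_mem_nhdsLT hab)).and hslope).exists
  rw [slope_comm, slope_def_field, div_pos_iff_of_pos_right (sub_pos.2 ht.2), sub_pos] at hs
  exact ⟨t, ht, hs⟩

theorem StrictConvexOn.neg_of_mem_Ioo {s : Set ℝ} {φ : ℝ → ℝ} (hφ : StrictConvexOn ℝ s φ)
    {a b c : ℝ} (ha : a ∈ s) (hb : b ∈ s) (ha0 : φ a = 0) (hb0 : φ b = 0) (hc : c ∈ Ioo a b) :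
    φ c < 0 := by
  have hab := hc.1.trans hc.2
  have := hφ.lt_on_openSegment ha hb hab.ne (by rwa [openSegment_eq_Ioo hab])
  rwa [ha0, hb0, max_self] at this

theorem StrictConvexOn.pos_of_lt {s : Set ℝ} {φ : ℝ → ℝ} (hφ : StrictConvexOn ℝ s φ)
    {a b c : ℝ} (hb : b ∈ s) (hc : c ∈ s) (ha0 : φ a = 0) (hb0 : φ b = 0) (hca : c < a)
    (hab : a < b) : 0 < φ c := by
  have hcb := hca.trans hab
  have := hφ.lt_on_openSegment hc hb hcb.ne (by rw [openSegment_eq_Ioo hcb]; exact ⟨hca, hab⟩)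
  rw [ha0, hb0] at this
  exact (lt_max_iff.1 this).resolve_right (lt_irrefl 0)

theorem Real.mul_exp_neg_lt_exp_neg_one {y : ℝ} (hy : y ≠ 1) : y * exp (-y) < exp (-1) := by
  have h : y < exp (y - 1) := by simpa using add_one_lt_exp (sub_ne_zero.2 hy)
  calc y * exp (-y) < exp (y - 1) * exp (-y) := by gcongr
    _ = exp (-1) := by rw [← exp_add]; ring_nf

theorem Real.strictAntiOn_mul_exp_neg : StrictAntiOn (fun y => y * exp (-y)) (Ici 1) := by
  refine strictAntiOn_of_deriv_neg (convex_Ici 1) (by fun_prop) fun y hy => ?_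
  rw [interior_Ici, mem_Ioi] at hy
  have hd : HasDerivAt (fun y => y * exp (-y)) ((1 - y) * exp (-y)) y :=
    ((hasDerivAt_id' y).fun_mul (hasDerivAt_neg y).exp).congr_deriv (by ring)
  rw [hd.deriv]
  exact mul_neg_of_neg_of_pos (by linarith) (exp_pos _)

noncomputable def expDecay (lam x : ℝ) : ℝ := exp (-(lam * x))

noncomputable def secondIterateSub (lam x : ℝ) : ℝ := (expDecay lam)^[2] x - x

section ExpDecay

variable {lam : ℝ}

theorem expDecay_pos (x : ℝ) : 0 < expDecay lam x := exp_pos _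

theorem continuous_expDecay : Continuous (expDecay lam) := by
  unfold expDecay; fun_prop

theorem expDecay_strictAnti (hlam : 0 < lam) : StrictAnti (expDecay lam) := fun _ _ h =>
  exp_lt_exp.2 (neg_lt_neg (mul_lt_mul_of_pos_left h hlam))

theorem hasDerivAt_expDecay (x : ℝ) :
    HasDerivAt (expDecay lam) (-(lam * expDecay lam x)) x := by
  have h : HasDerivAt (fun x => -(lam * x)) (-lam) x := by
    simpa using ((hasDerivAt_id' x).const_mul lam).fun_neg
  exact h.exp.congr_deriv (by rw [expDecay]; ring)

theorem hasDerivAt_expDecay_of_fixedPt {M : ℝ} (hM : expDecay lam M = M) :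
    HasDerivAt (expDecay lam) (-(lam * M)) M := by
  simpa only [hM] using hasDerivAt_expDecay (lam := lam) M

theorem exists_expDecay_fixedPt (hlam : 0 < lam) : ∃ M ∈ Ioo (0 : ℝ) 1, expDecay lam M = M := by
  have h0 : expDecay lam 0 - 0 = 1 := by simp [expDecay]
  have h1 : expDecay lam 1 - 1 < 0 := by simpa [expDecay] using hlam
  obtain ⟨M, hM, hMeq⟩ := intermediate_value_Ioo' zero_le_one
    (continuous_expDecay.sub continuous_id).continuousOn
    (show (0 : ℝ) ∈ Ioo (expDecay lam 1 - 1) (expDecay lam 0 - 0) by rw [h0]; exact ⟨h1, one_pos⟩)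
  exact ⟨M, hM, sub_eq_zero.1 hMeq⟩

theorem expDecay_sub_strictAnti (hlam : 0 < lam) : StrictAnti fun x => expDecay lam x - x :=
  fun _ _ h => sub_lt_sub (expDecay_strictAnti hlam h) h

theorem expDecay_fixedPt_unique (hlam : 0 < lam) {M M' : ℝ} (hM : expDecay lam M = M)
    (hM' : expDecay lam M' = M') : M' = M :=
  (expDecay_sub_strictAnti hlam).injective (by simp only [hM, hM', sub_self])

theorem lt_fixedPt_iff_lt_expDecay (hlam : 0 < lam) {M x : ℝ} (hM : expDecay lam M = M) :
    x < M ↔ x < expDecay lam x := by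
  rw [← (expDecay_sub_strictAnti hlam).lt_iff_gt, hM, sub_self, sub_pos]

theorem one_lt_mul_fixedPt (he : exp 1 < lam) {M : ℝ} (hM : expDecay lam M = M) :
    1 < lam * M := by
  have hlam0 : 0 < lam := (exp_pos 1).trans he
  have h : lam⁻¹ < expDecay lam lam⁻¹ := by
    rw [expDecay, mul_inv_cancel₀ hlam0.ne', exp_neg]
    exact inv_strictAnti₀ (exp_pos 1) he
  have := (lt_fixedPt_iff_lt_expDecay hlam0 hM).2 h
  rwa [inv_lt_iff_one_lt_mul₀' hlam0] at this


theorem continuous_secondIterateSub : Continuous (secondIterateSub lam) :=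
  (continuous_expDecay.iterate 2).sub continuous_id

theorem hasDerivAt_secondIterateSub (x : ℝ) :
    HasDerivAt (secondIterateSub lam)
      (lam * (lam * expDecay lam x * exp (-(lam * expDecay lam x))) - 1) x := by
  have h := (hasDerivAt_expDecay (lam := lam) (expDecay lam x)).comp x (hasDerivAt_expDecay x)
  exact (h.sub (hasDerivAt_id x)).congr_deriv (by rw [expDecay]; ring)

theorem secondIterateSub_strictAnti (hlam : 0 < lam) (he : lam ≤ exp 1) :
    StrictAnti (secondIterateSub lam) := by
  set x₀ := log lam / lam
  have hx₀ : lam * expDecay lam x₀ = 1 := by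
    rw [expDecay, mul_div_cancel₀ _ hlam.ne', exp_neg, exp_log hlam, mul_inv_cancel₀ hlam.ne']
  have hderiv : ∀ x ≠ x₀, deriv (secondIterateSub lam) x < 0 := fun x hx => by
    have hu : lam * expDecay lam x ≠ 1 := by
      rw [← hx₀]
      exact fun h => hx ((expDecay_strictAnti hlam).injective (mul_left_cancel₀ hlam.ne' h))
    rw [(hasDerivAt_secondIterateSub x).deriv, sub_neg]
    calc lam * _ < lam * exp (-1) := mul_lt_mul_of_pos_left (mul_exp_neg_lt_exp_neg_one hu) hlam
      _ ≤ exp 1 * exp (-1) := by gcongr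
      _ = 1 := by rw [← exp_add]; simp
  refine StrictAntiOn.Iic_union_Ici (a := x₀)
    (strictAntiOn_of_deriv_neg (convex_Iic x₀) continuous_secondIterateSub.continuousOn
      fun x hx => hderiv x ?_)
    (strictAntiOn_of_deriv_neg (convex_Ici x₀) continuous_secondIterateSub.continuousOn
      fun x hx => hderiv x ?_)
  · rw [interior_Iic] at hx; exact hx.ne
  · rw [interior_Ici] at hx; exact hx.ne'

theorem tendsto_expDecay_iterate_of_le_exp (hlam : 0 < lam) (he : lam ≤ exp 1) {M : ℝ}
    (hM : expDecay lam M = M) (x : ℝ) :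
    Tendsto (fun n => (expDecay lam)^[n] x) atTop (𝓝 M) := by
  have hM2 : (expDecay lam)^[2] M = M := iterate_fixed hM 2
  have hG := secondIterateSub_strictAnti hlam he
  have hGM : secondIterateSub lam M = 0 := by rw [secondIterateSub, hM2, sub_self]
  obtain ⟨heven, hodd⟩ := (expDecay_strictAnti hlam).antitone.tendsto_iterate_even_odd
    continuous_expDecay hM2 (fun c hc => sub_pos.1 (hGM ▸ hG hc.2))
    (fun c hc => sub_neg.1 (hGM ▸ hG hc.1))
  rw [hM] at hodd
  exact tendsto_of_tendsto_even_odd heven hodd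

theorem secondIterateSub_strictConvexOn (hlam : 0 < lam) {M : ℝ} (hM : expDecay lam M = M)
    (hlamM : 1 < lam * M) : StrictConvexOn ℝ (Iic M) (secondIterateSub lam) := by
  refine StrictMonoOn.strictConvexOn_of_deriv (convex_Iic M)
    continuous_secondIterateSub.continuousOn ?_
  have hu : ∀ z ∈ Iio M, 1 ≤ lam * expDecay lam z := fun z hz => by
    have := mul_lt_mul_of_pos_left (hM ▸ expDecay_strictAnti hlam hz) hlam
    linarith
  rw [interior_Iic]
  intro x hx y hy hxy
  simp only [(hasDerivAt_secondIterateSub _).deriv]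
  have := strictAntiOn_mul_exp_neg (hu y hy) (hu x hx)
    (mul_lt_mul_of_pos_left (expDecay_strictAnti hlam hxy) hlam)
  exact sub_lt_sub_right (mul_lt_mul_of_pos_left this hlam) 1

theorem exists_periodTwo_below_fixedPt (hlam : 0 < lam) {M : ℝ} (hM : expDecay lam M = M)
    (hlamM : 1 < lam * M) :
    ∃ L ∈ Ioo 0 M, expDecay lam (expDecay lam L) = L ∧
      (∀ c ∈ Ico 0 L, c < (expDecay lam)^[2] c) ∧ ∀ c ∈ Ioo L M, (expDecay lam)^[2] c < c := by
  have hM0 : 0 < M := hM ▸ expDecay_pos M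
  have hGM : secondIterateSub lam M = 0 := by
    rw [secondIterateSub, iterate_fixed hM, sub_self]
  have hG'M : HasDerivAt (secondIterateSub lam) (lam * (lam * M * M) - 1) M := by
    have h := hasDerivAt_secondIterateSub (lam := lam) M
    rwa [hM, show exp (-(lam * M)) = M from hM] at h
  obtain ⟨t, ht, hGt⟩ := hG'M.exists_mem_Ioo_lt_of_pos (by nlinarith) hM0
  have hG0 : 0 < secondIterateSub lam 0 := by
    simpa [secondIterateSub] using expDecay_pos (lam := lam) (expDecay lam 0)
  obtain ⟨L, hL, hGL⟩ := intermediate_value_Ioo' ht.1.le continuous_secondIterateSub.continuousOn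
    ⟨hGM ▸ hGt, hG0⟩
  have hLM : L < M := hL.2.trans ht.2
  have hconv := secondIterateSub_strictConvexOn hlam hM hlamM
  refine ⟨L, ⟨hL.1, hLM⟩, sub_eq_zero.1 hGL, fun c hc => sub_pos.1 ?_, fun c hc => sub_neg.1 ?_⟩
  · exact hconv.pos_of_lt (mem_Iic.2 le_rfl) (mem_Iic.2 (hc.2.trans hLM).le) hGL hGM hc.2 hLM
  · exact hconv.neg_of_mem_Ioo (mem_Iic.2 hLM.le) (mem_Iic.2 le_rfl) hGL hGM hc

theorem exists_periodTwo_orbit (hlam : 0 < lam) {M : ℝ} (hM : expDecay lam M = M)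
    (hlamM : 1 < lam * M) :
    ∃ L U, L < M ∧ M < U ∧ expDecay lam L = U ∧ expDecay lam U = L ∧
      (∀ c ∈ Ico 0 L, c < (expDecay lam)^[2] c) ∧ (∀ c ∈ Ioo L M, (expDecay lam)^[2] c < c) ∧
      (∀ c ∈ Ioo M U, c < (expDecay lam)^[2] c) ∧ ∀ c ∈ Ioi U, (expDecay lam)^[2] c < c := by
  obtain ⟨L, hL, hL2, hbelow, hbetween⟩ := exists_periodTwo_below_fixedPt hlam hM hlamM
  have hanti := expDecay_strictAnti hlam
  refine ⟨L, expDecay lam L, hL.2, hM ▸ hanti hL.2, rfl, hL2, hbelow, hbetween,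
    fun c hc => ?_, fun c hc => ?_⟩
  -- `f` maps `(M, U)` into `(L, M)` and `(U, ∞)` into `(0, L)`, and `f^[2] (f c) = f (f^[2] c)`.
  · have : expDecay lam c ∈ Ioo L M := ⟨hL2 ▸ hanti hc.2, hM ▸ hanti hc.1⟩
    exact hanti.lt_iff_gt.1 (hbetween _ this)
  · have : expDecay lam c ∈ Ico 0 L := ⟨(expDecay_pos c).le, hL2 ▸ hanti hc⟩
    exact hanti.lt_iff_gt.1 (hbelow _ this)

end ExpDecay

theorem stmt_19 (lam : ℝ) (hlam : 0 < lam) :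
    let f : ℝ → ℝ := fun x => Real.exp (-(lam * x));
    ∃ M : ℝ, M ∈ Set.Ioo (0:ℝ) 1 ∧ f M = M ∧
      (∀ M' ∈ Set.Ioo (0:ℝ) 1, f M' = M' → M' = M) ∧
      (lam ≤ Real.exp 1 →
        ∀ x : ℝ, 0 ≤ x → Tendsto (fun n => f^[n] x) atTop (nhds M)) ∧
      (lam = Real.exp 1 → M = Real.exp (-1) ∧ HasDerivAt f (-1) M) ∧
      (Real.exp 1 < lam →
        1 < lam * M ∧ HasDerivAt f (-(lam * M)) M ∧
        ∃ L U : ℝ, L < M ∧ M < U ∧ f L = U ∧ f U = L ∧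
          ∀ x : ℝ, 0 ≤ x → x ≠ M →
            ((Tendsto (fun n => f^[2*n] x) atTop (nhds L) ∧
              Tendsto (fun n => f^[2*n+1] x) atTop (nhds U)) ∨
             (Tendsto (fun n => f^[2*n] x) atTop (nhds U) ∧
              Tendsto (fun n => f^[2*n+1] x) atTop (nhds L)))) := by
  intro f
  rw [show f = expDecay lam from rfl]
  obtain ⟨M, hM01, hM⟩ := exists_expDecay_fixedPt hlam
  refine ⟨M, hM01, hM, fun M' _ hM' => expDecay_fixedPt_unique hlam hM hM',
    fun he x _ => tendsto_expDecay_iterate_of_le_exp hlam he hM x, fun he => ?_, fun he => ?_⟩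
  · have hMe : M = exp (-1) := expDecay_fixedPt_unique hlam (M := exp (-1))
      (by rw [expDecay, he, ← exp_add]; norm_num) hM
    refine ⟨hMe, ?_⟩
    have h : lam * M = 1 := by rw [he, hMe, ← exp_add]; norm_num
    simpa only [h] using hasDerivAt_expDecay_of_fixedPt hM
  have hlamM := one_lt_mul_fixedPt he hM
  obtain ⟨L, U, hLM, hMU, hLU, hUL, hbelow, hbetween, habove, hbeyond⟩ :=
    exists_periodTwo_orbit hlam hM hlamM
  refine ⟨hlamM, hasDerivAt_expDecay_of_fixedPt hM, L, U, hLM, hMU, hLU, hUL, fun x hx hxM => ?_⟩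
  have hanti := (expDecay_strictAnti hlam).antitone
  rcases hxM.lt_or_gt with hxM | hMx
  · left
    have hL2 : (expDecay lam)^[2] L = L := by simp [hLU, hUL]
    simpa only [hLU] using hanti.tendsto_iterate_even_odd continuous_expDecay hL2
      (fun c hc => hbelow c ⟨hx.trans hc.1, hc.2⟩)
      (fun c hc => hbetween c ⟨hc.1, hc.2.trans_lt hxM⟩)
  · right
    have hU2 : (expDecay lam)^[2] U = U := by simp [hLU, hUL]
    simpa only [hUL] using hanti.tendsto_iterate_even_odd continuous_expDecay hU2
      (fun c hc => habove c ⟨hMx.trans_le hc.1, hc.2⟩) (fun c hc => hbeyond c hc.1)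
end
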